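/- arXiv:1012.1283 — 13 statements merged into one kernel-verified Lean document; each statement's English description precedes it below -/
import Mathlib

section
/- For all natural numbers p, q, r and m ≥ 1, the number of predicates T : B^p × B^q × B^r → Bool whose decomposition complexity is at most m is at most m · 2^(m·2^(p+q) + m·2^(q+r) + 2^m). -/
/-- `BS k` is the set of binary strings of length `k`. -/
abbrev BS (k : ℕ) := Fin k → Bool

/-- The decomposition complexity of `T : B^p × B^q × B^r → M` is at most `n`. -/
def DecompBound {p q r : ℕ} {M : Type*} (T : BS p → BS q → BS r → M) (n : ℕ) : Prop :=
  ∃ u v : ℕ, u + v ≤ n ∧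
    ∃ (a : BS p → BS q → BS u) (b : BS q → BS r → BS v) (t : BS u → BS v → M),
      ∀ x y z, T x y z = t (a x y) (b y z)

/-- Encoding type: a padded decomposition with `u + v = m` exactly. -/
abbrev DecompEnc (p q r m : ℕ) :=
  Σ u : Fin (m + 1), (BS p → BS q → BS (u : ℕ)) × (BS q → BS r → BS (m - (u : ℕ))) ×
    (BS (u : ℕ) → BS (m - (u : ℕ)) → Bool)

noncomputable instance instEncFintype (p q r m : ℕ) : Fintype (DecompEnc p q r m) :=
  @Sigma.instFintype _ _ (fun _ => Fintype.ofFinite _) inferInstance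

def decodeEnc {p q r m : ℕ} (e : DecompEnc p q r m) : BS p → BS q → BS r → Bool :=
  fun x y z => e.2.2.2 (e.2.1 x y) (e.2.2.1 y z)

lemma exists_enc {p q r m : ℕ} {T : BS p → BS q → BS r → Bool} (hT : DecompBound T m) :
    ∃ e : DecompEnc p q r m, decodeEnc e = T := by
  obtain ⟨u, v, huv, a, b, t, hTt⟩ := hT
  refine ⟨⟨⟨u, by omega⟩, a,
      fun y z i => if h : (i : ℕ) < v then b y z ⟨i, h⟩ else false,
      fun s w => t s (fun j => w ⟨j, by have := j.isLt; simp only [Fin.val_mk]; omega⟩)⟩, ?_⟩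
  funext x y z
  simp only [decodeEnc, hTt]
  congr 1
  funext j
  simp [j.isLt]

lemma card_BS (k : ℕ) : Nat.card (BS k) = 2 ^ k := by simp [Nat.card_eq_fintype_card]

lemma card_fun2 (a b c : ℕ) : Nat.card (BS a → BS b → BS c) = 2 ^ (c * 2 ^ (a + b)) := by
  rw [Nat.card_fun, Nat.card_fun, card_BS, card_BS, card_BS, ← pow_mul, ← pow_mul, pow_add]
  ring_nf

lemma card_t (u v : ℕ) : Nat.card (BS u → BS v → Bool) = 2 ^ 2 ^ (u + v) := by
  rw [Nat.card_fun, Nat.card_fun, Nat.card_eq_fintype_card (α := Bool), card_BS, card_BS,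
    Fintype.card_bool, ← pow_mul]
  congr 1
  rw [pow_add]
  ring

lemma exp_bound_aux (A B u m : ℕ) (hA : 1 ≤ A) (hB : 1 ≤ B) (hm : 1 ≤ m) (hu : u ≤ m) :
    u * A + (m - u) * B + 2 ^ m ≤ m * A + m * B + 2 ^ m - 1 := by
  rcases Nat.eq_zero_or_pos u with h | h
  · subst h
    have h3 : 1 ≤ m * A := le_trans hm (Nat.le_mul_of_pos_right m hA)
    simp only [Nat.zero_mul, Nat.sub_zero, Nat.zero_add]
    omega
  · have h1 : u * A ≤ m * A := Nat.mul_le_mul_right _ hu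
    have h2 : (m - u) * B + 1 ≤ m * B := by
      calc (m - u) * B + 1 ≤ (m - 1) * B + B := by
            exact Nat.add_le_add (Nat.mul_le_mul_right _ (by omega)) hB
        _ = m * B := by
            have : m - 1 + 1 = m := by omega
            nlinarith [this]
    omega

/-- The number of predicates `T : B^p × B^q × B^r → Bool` of decomposition complexity
at most `m` is at most `m · 2^(m·2^(p+q) + m·2^(q+r) + 2^m)`. -/
theorem count_predicates_of_bounded_decomposition_complexity (p q r m : ℕ) (hm : 1 ≤ m) :
    Nat.card {T : BS p → BS q → BS r → Bool // DecompBound T m}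
      ≤ m * 2 ^ (m * 2 ^ (p + q) + m * 2 ^ (q + r) + 2 ^ m) := by
  classical
  set S := m * 2 ^ (p + q) + m * 2 ^ (q + r) + 2 ^ m with hS
  have h2m : 1 ≤ 2 ^ m := Nat.one_le_two_pow
  have hS1 : 1 ≤ S := by omega
  -- injection into the encoding type
  have hinj : Function.Injective
      (fun T : {T : BS p → BS q → BS r → Bool // DecompBound T m} =>
        Classical.choose (exists_enc T.2)) := by
    intro T1 T2 h
    have h1 := Classical.choose_spec (exists_enc T1.2)
    have h2 := Classical.choose_spec (exists_enc T2.2)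
    apply Subtype.ext
    rw [← h1, ← h2]
    simp only at h
    rw [h]
  have key : Nat.card {T : BS p → BS q → BS r → Bool // DecompBound T m}
      ≤ Nat.card (DecompEnc p q r m) := Nat.card_le_card_of_injective _ hinj
  have hcard : Nat.card (DecompEnc p q r m)
      = ∑ u : Fin (m + 1), 2 ^ ((u : ℕ) * 2 ^ (p + q) + (m - (u : ℕ)) * 2 ^ (q + r) + 2 ^ m) := by
    rw [Nat.card_eq_fintype_card]
    show @Fintype.card _ (@Sigma.instFintype _ _ (fun _ => Fintype.ofFinite _) inferInstance) = _
    rw [@Fintype.card_sigma _ _ _ (fun _ => Fintype.ofFinite _)]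
    refine Finset.sum_congr rfl fun u _ => ?_
    have : @Fintype.card _ (Fintype.ofFinite _)
        = Nat.card ((BS p → BS q → BS (u : ℕ)) × (BS q → BS r → BS (m - (u : ℕ))) ×
          (BS (u : ℕ) → BS (m - (u : ℕ)) → Bool)) :=
      (@Nat.card_eq_fintype_card _ (Fintype.ofFinite _)).symm
    rw [this, Nat.card_prod, Nat.card_prod, card_fun2, card_fun2, card_t]
    have hu : (u : ℕ) + (m - (u : ℕ)) = m := by have := u.isLt; omega
    rw [hu, ← pow_add, ← pow_add]
    ring_nf
  have hsum : ∑ u : Fin (m + 1),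
      2 ^ ((u : ℕ) * 2 ^ (p + q) + (m - (u : ℕ)) * 2 ^ (q + r) + 2 ^ m)
      ≤ (m + 1) * 2 ^ (S - 1) := by
    calc ∑ u : Fin (m + 1), 2 ^ ((u : ℕ) * 2 ^ (p + q) + (m - (u : ℕ)) * 2 ^ (q + r) + 2 ^ m)
        ≤ ∑ _u : Fin (m + 1), 2 ^ (S - 1) := by
          refine Finset.sum_le_sum fun u _ => Nat.pow_le_pow_right (by norm_num) ?_
          have hb := exp_bound_aux (2 ^ (p + q)) (2 ^ (q + r)) (u : ℕ) m
            Nat.one_le_two_pow Nat.one_le_two_pow hm (by have := u.isLt; omega)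
          omega
      _ = (m + 1) * 2 ^ (S - 1) := by
          rw [Finset.sum_const, Finset.card_univ, Fintype.card_fin, smul_eq_mul]
  calc Nat.card {T : BS p → BS q → BS r → Bool // DecompBound T m}
      ≤ (m + 1) * 2 ^ (S - 1) := le_trans key (hcard ▸ hsum)
    _ ≤ (2 * m) * 2 ^ (S - 1) := Nat.mul_le_mul_right _ (by omega)
    _ = m * 2 ^ S := by
        have h : S - 1 + 1 = S := by omega
        calc (2 * m) * 2 ^ (S - 1) = m * (2 ^ (S - 1) * 2) := by ring
          _ = m * 2 ^ (S - 1 + 1) := by rw [pow_succ]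
          _ = m * 2 ^ S := by rw [h]
end

section
/- There exists a constant C such that for all natural numbers p, q, r with n = p + q + r, if p ≥ log₂ n + C and r ≥ log₂ n + C, then there exists a predicate T : B^p × B^q × B^r → Bool whose decomposition complexity is greater than n − C. -/
open Finset

lemma card_bs_to_bs_to (p q : ℕ) (M : Type*) [Fintype M] :
    Fintype.card (BS p → BS q → M) = Fintype.card M ^ 2 ^ (p + q) := by
  simp only [Fintype.card_fun, Fintype.card_bool, Fintype.card_fin, ← pow_mul, pow_add]
  ring_nf

lemma card_bs_to_bs_to_bs_to (p q r : ℕ) (M : Type*) [Fintype M] :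
    Fintype.card (BS p → BS q → BS r → M) = Fintype.card M ^ 2 ^ (p + q + r) := by
  rw [Fintype.card_fun, card_bs_to_bs_to, Fintype.card_fun, Fintype.card_bool, Fintype.card_fin,
    ← pow_mul, pow_add 2 (p + q)]
  ring_nf

def decomposable (p q r u v : ℕ) (M : Type*) [Fintype M] [DecidableEq M] :
    Finset (BS p → BS q → BS r → M) :=
  univ.image fun abt : (BS p → BS q → BS u) × (BS q → BS r → BS v) × (BS u → BS v → M) =>
    fun x y z => abt.2.2 (abt.1 x y) (abt.2.1 y z)

lemma decompBound_iff_exists_mem_decomposable {p q r : ℕ} {M : Type*} [Fintype M]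
    [DecidableEq M] (T : BS p → BS q → BS r → M) (n : ℕ) :
    DecompBound T n ↔ ∃ u v, u + v ≤ n ∧ T ∈ decomposable p q r u v M := by
  simp only [DecompBound, decomposable, mem_image, mem_univ, true_and, Prod.exists, funext_iff]
  refine exists₂_congr fun u v => and_congr_right fun _ => ?_
  exact ⟨fun ⟨a, b, t, h⟩ => ⟨a, b, t, fun x y z => (h x y z).symm⟩,
    fun ⟨a, b, t, h⟩ => ⟨a, b, t, fun x y z => (h x y z).symm⟩⟩

lemma card_decomposable_le (p q r u v : ℕ) (M : Type*) [Fintype M] [DecidableEq M] :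
    #(decomposable p q r u v M) ≤
      2 ^ (u * 2 ^ (p + q)) * 2 ^ (v * 2 ^ (q + r)) * Fintype.card M ^ 2 ^ (u + v) := by
  refine card_image_le.trans_eq ?_
  rw [card_univ, Fintype.card_prod, Fintype.card_prod, card_bs_to_bs_to, card_bs_to_bs_to,
    card_bs_to_bs_to]
  simp only [Fintype.card_fun, Fintype.card_bool, Fintype.card_fin, ← pow_mul, mul_assoc]

def decompCountBound (p q r n : ℕ) : ℕ :=
  (n + 1) ^ 2 * 2 ^ (n * 2 ^ (p + q) + n * 2 ^ (q + r) + 2 ^ n)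

lemma exists_not_decompBound {p q r : ℕ} (n : ℕ)
    (h : decompCountBound p q r n < 2 ^ 2 ^ (p + q + r)) :
    ∃ T : BS p → BS q → BS r → Bool, ¬ DecompBound T n := by
  by_contra! hall
  let shapes := (range (n + 1) ×ˢ range (n + 1)).filter fun uv => uv.1 + uv.2 ≤ n
  have hcover : univ ⊆ shapes.biUnion fun uv => decomposable p q r uv.1 uv.2 Bool := by
    intro T _
    obtain ⟨u, v, huv, hT⟩ := (decompBound_iff_exists_mem_decomposable T n).1 (hall T)
    refine mem_biUnion.2 ⟨(u, v), ?_, hT⟩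
    simp only [shapes, mem_filter, mem_product, mem_range]
    omega
  have hshapes : #shapes ≤ (n + 1) ^ 2 := by
    simpa [sq] using card_filter_le (range (n + 1) ×ˢ range (n + 1)) _
  have hshape : ∀ uv ∈ shapes, #(decomposable p q r uv.1 uv.2 Bool) ≤
      2 ^ (n * 2 ^ (p + q) + n * 2 ^ (q + r) + 2 ^ n) := by
    rintro ⟨u, v⟩ huv
    simp only [shapes, mem_filter] at huv
    refine (card_decomposable_le p q r u v Bool).trans ?_
    rw [Fintype.card_bool, ← pow_add, ← pow_add]
    gcongr <;> omega
  refine h.not_ge ?_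
  calc 2 ^ 2 ^ (p + q + r) = #(univ : Finset (BS p → BS q → BS r → Bool)) := by
        rw [card_univ, card_bs_to_bs_to_bs_to, Fintype.card_bool]
    _ ≤ #(shapes.biUnion fun uv => decomposable p q r uv.1 uv.2 Bool) := card_le_card hcover
    _ ≤ #shapes * 2 ^ (n * 2 ^ (p + q) + n * 2 ^ (q + r) + 2 ^ n) :=
        card_biUnion_le_card_mul _ _ _ hshape
    _ ≤ decompCountBound p q r n := Nat.mul_le_mul_right _ hshapes

lemma mul_two_pow_lt_two_pow {m L s k : ℕ} (hm : m < 2 ^ L) (hk : L + s ≤ k) :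
    m * 2 ^ s < 2 ^ k :=
  calc m * 2 ^ s < 2 ^ L * 2 ^ s := by gcongr
    _ ≤ 2 ^ k := by rw [← pow_add]; exact Nat.pow_le_pow_right two_pos hk

lemma decompCountBound_sub_four_lt {p q r : ℕ} (hp : Nat.log 2 (p + q + r) + 4 ≤ p)
    (hr : Nat.log 2 (p + q + r) + 4 ≤ r) :
    decompCountBound p q r (p + q + r - 4) < 2 ^ 2 ^ (p + q + r) := by
  unfold decompCountBound
  set n := p + q + r
  set m := n - 4
  have hmL : m < 2 ^ (Nat.log 2 n + 1) :=
    (Nat.sub_le n 4).trans_lt (Nat.lt_pow_succ_log_self one_lt_two n)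
  have hpq : m * 2 ^ (p + q) < 2 ^ (n - 3) := mul_two_pow_lt_two_pow hmL (by omega)
  have hqr : m * 2 ^ (q + r) < 2 ^ (n - 3) := mul_two_pow_lt_two_pow hmL (by omega)
  have hsq : (m + 1) ^ 2 ≤ 2 ^ (2 * m) := by
    rw [pow_mul']; exact Nat.pow_le_pow_left Nat.lt_two_pow_self _
  have h2m : 2 * m < 2 ^ (n - 3) := by
    rw [show n - 3 = m + 1 by omega, pow_succ]; linarith [Nat.lt_two_pow_self (n := m)]
  have hn3 : 2 ^ n = 2 ^ 3 * 2 ^ (n - 3) := by rw [← pow_add]; congr 1; omega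
  have hm3 : 2 ^ (n - 3) = 2 * 2 ^ m := by rw [← pow_succ']; congr 1; omega
  calc (m + 1) ^ 2 * 2 ^ (m * 2 ^ (p + q) + m * 2 ^ (q + r) + 2 ^ m)
      ≤ 2 ^ (2 * m) * 2 ^ (m * 2 ^ (p + q) + m * 2 ^ (q + r) + 2 ^ m) := by gcongr
    _ = 2 ^ (2 * m + (m * 2 ^ (p + q) + m * 2 ^ (q + r) + 2 ^ m)) := (pow_add _ _ _).symm
    _ < 2 ^ 2 ^ n := Nat.pow_lt_pow_right one_lt_two (by omega)

/-- If `p` and `r` are at least `log₂ n + C` (with `n = p + q + r`), then some predicate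
on `B^p × B^q × B^r` has decomposition complexity greater than `n - C`. -/
theorem exists_predicate_of_high_decomposition_complexity :
    ∃ C : ℕ, ∀ p q r : ℕ,
      Nat.log 2 (p + q + r) + C ≤ p → Nat.log 2 (p + q + r) + C ≤ r →
      ∃ T : BS p → BS q → BS r → Bool, ¬ DecompBound T (p + q + r - C) :=
  ⟨4, fun _ _ _ hp hr => exists_not_decompBound _ (decompCountBound_sub_four_lt hp hr)⟩
end

section
/- Let k be a natural number and let T_k : B^k × B^(2^(2k)) × B^k → Bool be the indexing predicate T_k(x,y,z) = y(x,z). For any natural numbers u, v and any functions a : B^k × B^(2^(2k)) → B^u, b : B^(2^(2k)) × B^k → B^v, t : B^u × B^v → Bool satisfying T_k(x,y,z) = t(a(x,y), b(y,z)) for all x, y, z, one has u + v ≥ 2^k. In particular, the decomposition complexity of T_k is at least 2^k. -/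
/-- The indexing predicate `T(x,y,z) = y(x,z)` (where `y ∈ B^(2^(2k))` is viewed as a
function `B^k × B^k → Bool` via a bijection `e`) has decomposition complexity at
least `2^k`: every decomposition `y(x,z) = t(a(x,y), b(y,z))` satisfies `u + v ≥ 2^k`. -/
theorem indexing_predicate_lower_bound (k : ℕ) (e : (BS k × BS k) ≃ Fin (2 ^ (2 * k)))
    (u v : ℕ) (a : BS k → BS (2 ^ (2 * k)) → BS u) (b : BS (2 ^ (2 * k)) → BS k → BS v)
    (t : BS u → BS v → Bool)
    (h : ∀ (x : BS k) (y : BS (2 ^ (2 * k))) (z : BS k),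
      y (e (x, z)) = t (a x y) (b y z)) :
    2 ^ k ≤ u + v := by
  have hinj : Function.Injective
      (fun y : BS (2 ^ (2 * k)) => ((fun x => a x y, fun z => b y z) :
        (BS k → BS u) × (BS k → BS v))) := by
    intro y y' hy
    funext i
    obtain ⟨⟨x, z⟩, rfl⟩ := e.surjective i
    have ha : a x y = a x y' := congrFun (congrArg Prod.fst hy) x
    have hb : b y z = b y' z := congrFun (congrArg Prod.snd hy) z
    rw [h x y z, h x y' z, ha, hb]
  have hcard := Fintype.card_le_of_injective _ hinj
  simp only [Fintype.card_prod, Fintype.card_fun, Fintype.card_bool,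
    Fintype.card_fin] at hcard
  rw [← pow_mul, ← pow_mul, ← pow_add, ← Nat.add_mul] at hcard
  have h2 : 2 ^ (2 * k) ≤ (u + v) * 2 ^ k :=
    (Nat.pow_le_pow_iff_right (by norm_num)).mp hcard
  rw [two_mul, pow_add] at h2
  exact Nat.le_of_mul_le_mul_right h2 (Nat.pos_of_ne_zero (by positivity))
end

section
/- Let p, q be natural numbers with q ≥ 0, and let EQ : B^p × B^q × B^p → Bool be the predicate EQ(x,y,z) = (x = z). For any u, v and any functions a : B^p × B^q → B^u, b : B^q × B^p → B^v, t : B^u × B^v → Bool satisfying EQ(x,y,z) = t(a(x,y), b(y,z)) for all x, y, z, one has u ≥ p and v ≥ p. In particular, the decomposition complexity of EQ is at least 2p. -/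
/-- For the equality predicate `EQ(x,y,z) = (x = z)` on `B^p × B^q × B^p`, every
decomposition `EQ(x,y,z) = t(a(x,y), b(y,z))` satisfies `u ≥ p` and `v ≥ p`;
in particular `u + v ≥ 2p`. -/
theorem equality_predicate_lower_bound (p q : ℕ)
    (u v : ℕ) (a : BS p → BS q → BS u) (b : BS q → BS p → BS v)
    (t : BS u → BS v → Bool)
    (h : ∀ (x : BS p) (y : BS q) (z : BS p),
      (decide (x = z)) = t (a x y) (b y z)) :
    p ≤ u ∧ p ≤ v ∧ 2 * p ≤ u + v := by
  set y : BS q := fun _ => false with hy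
  have ha : Function.Injective (fun x => a x y) := by
    intro x x' hxx'
    have h1 := h x y x
    have h2 := h x' y x
    simp only at hxx'
    rw [hxx'] at h1
    rw [← h2] at h1
    have : x' = x := by simpa using h1.symm
    exact this.symm
  have hb : Function.Injective (fun z => b y z) := by
    intro z z' hzz'
    have h1 := h z y z
    have h2 := h z y z'
    simp only at hzz'
    rw [hzz'] at h1
    rw [← h2] at h1
    simpa using h1.symm
  have cu : Fintype.card (BS p) ≤ Fintype.card (BS u) := Fintype.card_le_of_injective _ ha
  have cv : Fintype.card (BS p) ≤ Fintype.card (BS v) := Fintype.card_le_of_injective _ hb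
  simp only [Fintype.card_fun, Fintype.card_bool, Fintype.card_fin] at cu cv
  have hu : p ≤ u := (Nat.pow_le_pow_iff_right (by norm_num)).mp cu
  have hv : p ≤ v := (Nat.pow_le_pow_iff_right (by norm_num)).mp cv
  exact ⟨hu, hv, by omega⟩
end

section
/- Let k be a natural number and let T'_k : B^k × B^(2^k) × B^k → Bool be defined by T'_k(x,y,z) = y(x ⊕ z), where ⊕ denotes bitwise XOR of k-bit strings and y ∈ B^(2^k) is viewed as a function B^k → Bool. Then the decomposition complexity of T'_k is at most 2k + 4·(∑_{d=0}^{⌊k/3⌋} C(k,d)), where C(k,d) denotes the binomial coefficient. -/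
/-!
Over `𝔽₂`, `y` is a multilinear polynomial `∑_S c_S w^S`, so
`y(x ⊕ z) = ∑_S c_S ∏_{i ∈ S} (x_i + z_i) = ∑_{A ∩ B = ∅} c_{A ∪ B} x^A z^B`.
Put `s = ⌊k/3⌋`. The sets `S` with `|S| > 2s + 1` have complements of size `≤ s`, so there are
at most `N = #{B : |B| ≤ s}` of them and their coefficients can simply be sent. Every other
pair `(A, B)` has `|A| ≤ s` or `|B| ≤ s`: grouping by the small `B`, the coefficient of `z^B`
is a polynomial in `x` that the holder of `(x, y)` evaluates; grouping the remaining pairs by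
the small `A`, the holder of `(y, z)` evaluates the coefficient of `x^A`. Together with `x`
and `z` themselves this is `2k + 3N` bits.
-/

open Finset

theorem DecompBound.of_card_le {p q r : ℕ} {M α β : Type*} [Fintype α] [Fintype β]
    {T : BS p → BS q → BS r → M} {u v n : ℕ} (huv : u + v ≤ n)
    (hα : Fintype.card α ≤ 2 ^ u) (hβ : Fintype.card β ≤ 2 ^ v)
    (a : BS p → BS q → α) (b : BS q → BS r → β) (t : α → β → M)
    (h : ∀ x y z, T x y z = t (a x y) (b y z)) : DecompBound T n := by
  obtain ⟨f⟩ : Nonempty (α ↪ BS u) := Function.Embedding.nonempty_of_card_le (by simpa using hα)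
  obtain ⟨g⟩ : Nonempty (β ↪ BS v) := Function.Embedding.nonempty_of_card_le (by simpa using hβ)
  have : Nonempty α := ⟨a default default⟩
  have : Nonempty β := ⟨b default default⟩
  refine ⟨u, v, huv, fun x y => f (a x y), fun y z => g (b y z),
    fun m m' => t (Function.invFun f m) (Function.invFun g m'), fun x y z => ?_⟩
  simp only [Function.leftInverse_invFun f.injective _, Function.leftInverse_invFun g.injective _,
    h]

def boolEquivZModTwo : Bool ≃ ZMod 2 := finTwoEquiv.symm

theorem boolEquivZModTwo_xor (a b : Bool) :
    boolEquivZModTwo (xor a b) = boolEquivZModTwo a + boolEquivZModTwo b := by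
  revert a b; decide

theorem boolEquivZModTwo_add_not (a b : Bool) :
    boolEquivZModTwo a + boolEquivZModTwo (!b) = if a = b then 1 else 0 := by
  revert a b; decide

theorem exists_multilinear_repr {ι : Type*} [Fintype ι] [DecidableEq ι]
    (f : (ι → Bool) → ZMod 2) :
    ∃ c : Finset ι → ZMod 2, ∀ w, f w = ∑ S, c S * ∏ i ∈ S, boolEquivZModTwo (w i) := by
  refine ⟨fun S => ∑ v, f v * ∏ i ∈ Sᶜ, boolEquivZModTwo (!v i), fun w => ?_⟩
  have indicator :
      f w = ∑ v, f v * ∏ i, (boolEquivZModTwo (w i) + boolEquivZModTwo (!v i)) := by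
    rw [Fintype.sum_eq_single w]
    · simp [boolEquivZModTwo_add_not]
    · intro v hv
      obtain ⟨i, hi⟩ := Function.ne_iff.mp hv
      rw [prod_eq_zero (mem_univ i) (by simp [boolEquivZModTwo_add_not, Ne.symm hi]), mul_zero]
  simp_rw [indicator, prod_add, powerset_univ, mul_sum, sum_mul]
  rw [sum_comm]
  refine sum_congr rfl fun S _ => sum_congr rfl fun v _ => ?_
  rw [compl_eq_univ_sdiff]
  ring

section Split

variable {ι R : Type*} [Fintype ι] [DecidableEq ι] [CommSemiring R]

theorem sum_mul_prod_add_eq_sum_disjoint (c : Finset ι → R) (x z : ι → R) :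
    ∑ S, c S * ∏ i ∈ S, (x i + z i) =
      ∑ A, ∑ B with Disjoint A B, c (A ∪ B) * ((∏ i ∈ A, x i) * ∏ i ∈ B, z i) := by
  simp_rw [prod_add, mul_sum]
  rw [sum_comm' (t' := univ) (s' := fun A => {S | A ⊆ S}) (by simp)]
  refine sum_congr rfl fun A _ => sum_nbij' (· \ A) (A ∪ ·) ?_ ?_ ?_ ?_ ?_
  · simp [disjoint_sdiff]
  · simp
  · exact fun S hS => union_sdiff_of_subset (mem_filter.1 hS).2
  · exact fun B hB => union_sdiff_cancel_left (mem_filter.1 hB).2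
  · exact fun S hS => by rw [union_sdiff_of_subset (mem_filter.1 hS).2]

def cofactorX (s : ℕ) (c : Finset ι → R) (x : ι → R) (B : Finset ι) : R :=
  ∑ A with Disjoint A B ∧ #(A ∪ B) ≤ 2 * s + 1, c (A ∪ B) * ∏ i ∈ A, x i

def cofactorZ (s : ℕ) (c : Finset ι → R) (z : ι → R) (A : Finset ι) : R :=
  ∑ B with Disjoint A B ∧ #(A ∪ B) ≤ 2 * s + 1 ∧ s < #B, c (A ∪ B) * ∏ i ∈ B, z i

theorem sum_mul_prod_add_eq_high_add_cofactors (s : ℕ) (c : Finset ι → R) (x z : ι → R) :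
    ∑ S, c S * ∏ i ∈ S, (x i + z i) =
      ∑ S with 2 * s + 1 < #S, c S * ∏ i ∈ S, (x i + z i)
        + ∑ B with #B ≤ s, (∏ i ∈ B, z i) * cofactorX s c x B
        + ∑ A with #A ≤ s, (∏ i ∈ A, x i) * cofactorZ s c z A := by
  have high : ∑ S with 2 * s + 1 < #S, c S * ∏ i ∈ S, (x i + z i) =
      ∑ S, (if 2 * s + 1 < #S then c S else 0) * ∏ i ∈ S, (x i + z i) := by
    simp [sum_filter, ite_mul]
  rw [high, sum_mul_prod_add_eq_sum_disjoint, sum_mul_prod_add_eq_sum_disjoint]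
  simp only [cofactorX, cofactorZ, sum_filter, mul_sum, ite_sum_zero]
  rw [sum_comm (γ := Finset ι) (f := fun B A => if #B ≤ s then _ else 0), ← sum_add_distrib,
    ← sum_add_distrib]
  refine sum_congr rfl fun A _ => ?_
  rw [← sum_add_distrib, ← sum_add_distrib]
  refine sum_congr rfl fun B _ => ?_
  by_cases hAB : Disjoint A B
  · -- `#A + #B ≤ 2s + 1` forces `#A ≤ s` or `#B ≤ s`, so each pair lands in exactly one part
    have := card_union_of_disjoint hAB
    simp only [hAB, true_and, if_true]
    split_ifs <;> first | omega | ring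
  · simp [hAB]

end Split

section Counting

variable {ι : Type*} [Fintype ι]

theorem card_filter_card_le (s : ℕ) :
    #{B : Finset ι | #B ≤ s} = ∑ d ∈ range (s + 1), (Fintype.card ι).choose d := by
  rw [card_eq_sum_card_fiberwise (f := card) (t := range (s + 1))
    fun B hB => mem_range.2 (Nat.lt_succ_of_le (mem_filter.1 hB).2)]
  refine sum_congr rfl fun d hd => ?_
  have hds : d ≤ s := Nat.le_of_lt_succ (mem_range.1 hd)
  rw [← card_univ, ← card_powersetCard, filter_filter]
  congr 1
  ext B
  simp only [mem_filter, mem_univ, true_and, mem_powersetCard_univ]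
  exact ⟨And.right, fun h => ⟨h ▸ hds, h⟩⟩

theorem card_filter_lt_card_le_card_filter_card_le [DecidableEq ι] {s : ℕ}
    (h : Fintype.card ι ≤ 3 * s + 2) :
    #{S : Finset ι | 2 * s + 1 < #S} ≤ #{B : Finset ι | #B ≤ s} := by
  refine card_le_card_of_injOn compl (fun S hS => ?_) compl_injective.injOn
  simp only [coe_filter, mem_univ, true_and, Set.mem_ofPred_eq] at hS ⊢
  rw [card_compl]
  omega

end Counting

/-- The predicate `T'(x,y,z) = y(x ⊕ z)` (with `y ∈ B^(2^k)` viewed as a function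
`B^k → Bool` via a bijection `e`, and `⊕` the bitwise XOR) has decomposition
complexity at most `2k + 4·∑_{d=0}^{⌊k/3⌋} C(k,d)`. -/
theorem xor_indexing_upper_bound (k : ℕ) (e : BS k ≃ Fin (2 ^ k)) :
    DecompBound
      (fun (x : BS k) (y : BS (2 ^ k)) (z : BS k) => y (e (fun i => xor (x i) (z i))))
      (2 * k + 4 * ∑ d ∈ Finset.range (k / 3 + 1), Nat.choose k d) := by
  choose c hc using fun y : BS (2 ^ k) =>
    exists_multilinear_repr fun w => boolEquivZModTwo (y (e w))
  set low : Finset (Finset (Fin k)) := {B | #B ≤ k / 3}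
  set high : Finset (Finset (Fin k)) := {S | 2 * (k / 3) + 1 < #S}
  have hlow : #low = ∑ d ∈ range (k / 3 + 1), k.choose d := by
    simpa using card_filter_card_le (ι := Fin k) (k / 3)
  have hhigh : #high ≤ #low :=
    card_filter_lt_card_le_card_filter_card_le (by rw [Fintype.card_fin]; omega)
  refine DecompBound.of_card_le (u := k + #low + #high) (v := k + #low) (by omega)
    (by simp [pow_add, mul_assoc]) (by simp [pow_add])
    (fun x y => (x, fun B : low => cofactorX (k / 3) (c y) (boolEquivZModTwo ∘ x) B,
      fun S : high => c y S))
    (fun y z => (z, fun A : low => cofactorZ (k / 3) (c y) (boolEquivZModTwo ∘ z) A))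
    (fun m m' => boolEquivZModTwo.symm
      (∑ S : high, m.2.2 S * ∏ i ∈ S.1, (boolEquivZModTwo (m.1 i) + boolEquivZModTwo (m'.1 i))
        + ∑ B : low, (∏ i ∈ B.1, boolEquivZModTwo (m'.1 i)) * m.2.1 B
        + ∑ A : low, (∏ i ∈ A.1, boolEquivZModTwo (m.1 i)) * m'.2 A))
    fun x y z => ?_
  rw [← boolEquivZModTwo.symm_apply_apply (y _), hc]
  simp only [boolEquivZModTwo_xor, sum_mul_prod_add_eq_high_add_cofactors (k / 3)]
  refine congrArg _ (congrArg₂ (· + ·) (congrArg₂ (· + ·) ?_ ?_) ?_) <;>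
    exact (sum_coe_sort _ _).symm
end

section
/- Let k be an even natural number and let T'_k : B^k × B^(2^k) × B^k → Bool be defined by T'_k(x,y,z) = y(x ⊕ z), where ⊕ denotes bitwise XOR and y ∈ B^(2^k) is viewed as a function B^k → Bool. Then the decomposition complexity of T'_k is at least 2^(k/2); i.e., any a : B^k × B^(2^k) → B^u, b : B^(2^k) × B^k → B^v, t : B^u × B^v → Bool with T'_k(x,y,z) = t(a(x,y), b(y,z)) for all inputs satisfy u + v ≥ 2^(k/2). -/
theorem card_le_of_decomposition {X Y Z A B M : Type*}
    [Fintype X] [Fintype Y] [Fintype Z] [Fintype A] [Fintype B]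
    {T : X → Y → Z → M} (hT : ∀ y y', (∀ x z, T x y z = T x y' z) → y = y')
    {a : X → Y → A} {b : Y → Z → B} {t : A → B → M}
    (h : ∀ x y z, T x y z = t (a x y) (b y z)) :
    Fintype.card Y ≤ Fintype.card A ^ Fintype.card X * Fintype.card B ^ Fintype.card Z := by
  classical
  have hinj : Function.Injective fun y => ((fun x => a x y), (fun z => b y z)) := by
    intro y y' hyy
    simp only [Prod.mk.injEq, funext_iff] at hyy
    exact hT y y' fun x z => by rw [h, h, hyy.1, hyy.2]
  simpa only [Fintype.card_prod, Fintype.card_fun] using Fintype.card_le_of_injective _ hinj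

theorem xor_append_false_false {m : ℕ} (s s' : BS m) :
    (fun i => xor (Fin.append s (fun _ => false) i) (Fin.append (fun _ => false) s' i)) =
      Fin.append s s' := by
  funext i
  induction i using Fin.addCases <;>
    simp only [Fin.append_left, Fin.append_right, Bool.xor_false, Bool.false_xor]

theorem le_add_of_two_pow_two_pow_le {m u v : ℕ}
    (h : 2 ^ 2 ^ (m + m) ≤ (2 ^ u) ^ 2 ^ m * (2 ^ v) ^ 2 ^ m) : 2 ^ m ≤ u + v := by
  rw [← pow_mul, ← pow_mul, ← pow_add, ← add_mul,
    Nat.pow_le_pow_iff_right one_lt_two, pow_add] at h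
  exact Nat.le_of_mul_le_mul_right h (Nat.two_pow_pos m)

/-- For even `k`, the predicate `T'(x,y,z) = y(x ⊕ z)` has decomposition complexity
at least `2^(k/2)`: any decomposition `y(x ⊕ z) = t(a(x,y), b(y,z))` satisfies
`u + v ≥ 2^(k/2)`. -/
theorem xor_indexing_lower_bound (k : ℕ) (hk : Even k) (e : BS k ≃ Fin (2 ^ k))
    (u v : ℕ) (a : BS k → BS (2 ^ k) → BS u) (b : BS (2 ^ k) → BS k → BS v)
    (t : BS u → BS v → Bool)
    (h : ∀ (x : BS k) (y : BS (2 ^ k)) (z : BS k),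
      y (e (fun i => xor (x i) (z i))) = t (a x y) (b y z)) :
    2 ^ (k / 2) ≤ u + v := by
  obtain ⟨m, rfl⟩ := hk
  rw [show (m + m) / 2 = m by omega]
  have hrestrict : ∀ (s : BS m) (y : BS (2 ^ (m + m))) (s' : BS m),
      y (e (Fin.append s s')) =
        t (a (Fin.append s fun _ => false) y) (b y (Fin.append (fun _ => false) s')) := by
    intro s y s'
    rw [← h, xor_append_false_false]
  have hdetermined : ∀ y y' : BS (2 ^ (m + m)),
      (∀ s s', y (e (Fin.append s s')) = y' (e (Fin.append s s'))) → y = y' := by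
    intro y y' hyy
    funext j
    simpa only [Fin.append_castAdd_natAdd, Equiv.apply_symm_apply] using
      hyy (fun i => e.symm j (Fin.castAdd m i)) (fun i => e.symm j (Fin.natAdd m i))
  have hcard := card_le_of_decomposition hdetermined hrestrict
  simp only [Fintype.card_fun, Fintype.card_bool, Fintype.card_fin] at hcard
  exact le_add_of_two_pow_two_pow_le hcard
end

section
/- For every real ε with 0 < ε < 1/2 there exists a constant C such that for all natural numbers p, q, r with n = p + q + r, if p ≥ log₂ n + C and r ≥ log₂ n + C, then there exists a predicate T : B^p × B^q × B^r → Bool such that every predicate T' : B^p × B^q × B^r → Bool of decomposition complexity at most n − C differs from T on more than ε·2^n of the 2^n input triples. -/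
/-!
A counting argument. A predicate of decomposition complexity at most `m` is given by `u + v ≤ m`
and maps `a`, `b`, `t`, so there are at most `(m + 1)² · 2 ^ (m 2^(p+q) + m 2^(q+r) + 2^m)` of
them, which is `2 ^ O(2 ^ (n - C))` once `p, r ≥ log₂ n + C`. For any `0 < l ≤ 1`, a Hamming
ball of radius `ε N` in `{0,1}^N` has at most `((1 + l) l^(-ε)) ^ N` points, and for `ε < 1/2`
some `l` makes this base less than `2`; so with `N = 2 ^ n` the ball has at most
`2 ^ (N - N / 2 ^ K)` points. For `C = K + 4` the balls around all decomposable predicates cannot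
cover all `2 ^ N` predicates, and any predicate they miss is the required `T`.
-/

open Finset

theorem sum_range_choose_mul_pow_le {l : ℝ} (hl0 : 0 ≤ l) (hl1 : l ≤ 1) (N m : ℕ) :
    (∑ k ∈ range (m + 1), (N.choose k : ℝ)) * l ^ m ≤ (1 + l) ^ N := by
  have hterm : ∀ k, 0 ≤ (N.choose k : ℝ) * l ^ k := fun k => by positivity
  calc (∑ k ∈ range (m + 1), (N.choose k : ℝ)) * l ^ m
      ≤ ∑ k ∈ range (m + 1), (N.choose k : ℝ) * l ^ k := by
        rw [sum_mul]
        refine sum_le_sum fun k hk => mul_le_mul_of_nonneg_left ?_ (by positivity)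
        exact pow_le_pow_of_le_one hl0 hl1 (Nat.lt_succ_iff.mp (mem_range.mp hk))
    _ ≤ ∑ k ∈ range (N + 1), (N.choose k : ℝ) * l ^ k := by
        rcases le_total m N with h | h
        · exact sum_le_sum_of_subset_of_nonneg (range_subset_range.2 (by omega))
            fun k _ _ => hterm k
        · refine (sum_subset (range_subset_range.2 (by omega)) fun k _ hk => ?_).ge
          rw [Nat.choose_eq_zero_of_lt (by simpa using hk), Nat.cast_zero, zero_mul]
    _ = (1 + l) ^ N := by
        rw [add_comm 1 l, add_pow]
        simp [mul_comm]

theorem sum_range_choose_le_rpow {l ε : ℝ} (hl0 : 0 < l) (hl1 : l ≤ 1) {N m : ℕ}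
    (hm : (m : ℝ) ≤ ε * N) :
    ∑ k ∈ range (m + 1), (N.choose k : ℝ) ≤ ((1 + l) * l ^ (-ε)) ^ N := by
  have hpow : l ^ (ε * N) ≤ l ^ m := by
    simpa using Real.rpow_le_rpow_of_exponent_ge hl0 hl1 hm
  have hsum := (mul_le_mul_of_nonneg_left hpow (by positivity)).trans
    (sum_range_choose_mul_pow_le hl0.le hl1 N m)
  rwa [mul_pow, ← Real.rpow_mul_natCast hl0.le, neg_mul, Real.rpow_neg hl0.le, ← div_eq_mul_inv,
    le_div_iff₀ (by positivity)]

theorem exists_one_add_mul_rpow_neg_lt_two {ε : ℝ} (hε0 : 0 ≤ ε) (hε : ε < 1 / 2) :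
    ∃ l : ℝ, 0 < l ∧ l ≤ 1 ∧ (1 + l) * l ^ (-ε) < 2 := by
  set x : ℝ := 2 * (1 - ε)
  have hx0 : 0 < x := by linarith
  refine ⟨x⁻¹, by positivity, inv_le_one_of_one_le₀ (by linarith), ?_⟩
  -- Bernoulli's inequality `(1 + s) ^ ε ≤ 1 + ε s` with `s = 1 - 2 ε`.
  have hbern : x ^ ε ≤ 1 + ε * (1 - 2 * ε) := by
    have := rpow_one_add_le_one_add_mul_self (s := 1 - 2 * ε) (by linarith) hε0 (by linarith)
    rwa [show 1 + (1 - 2 * ε) = x by ring] at this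
  rw [Real.rpow_neg (by positivity), Real.inv_rpow hx0.le, inv_inv]
  calc (1 + x⁻¹) * x ^ ε ≤ (1 + x⁻¹) * (1 + ε * (1 - 2 * ε)) := by gcongr
    _ = 2 - (1 - 2 * ε) ^ 2 / 2 := by field_simp; ring
    _ < 2 := by nlinarith

theorem exists_sum_choose_mul_two_pow_le {ε : ℝ} (hε0 : 0 ≤ ε) (hε : ε < 1 / 2) :
    ∃ K : ℕ, ∀ N m : ℕ, (m : ℝ) ≤ ε * N →
      (∑ k ∈ range (m + 1), N.choose k) * 2 ^ (N / 2 ^ K) ≤ 2 ^ N := by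
  obtain ⟨l, hl0, hl1, hc⟩ := exists_one_add_mul_rpow_neg_lt_two hε0 hε
  set c := (1 + l) * l ^ (-ε)
  have hc0 : 0 ≤ c / 2 := by positivity
  obtain ⟨K, hK⟩ := exists_pow_lt_of_lt_one (by norm_num : (0 : ℝ) < 1 / 2)
    (by linarith : c / 2 < 1)
  refine ⟨K, fun N m hm => ?_⟩
  set d := N / 2 ^ K
  have hKd : K * d ≤ N :=
    (Nat.mul_le_mul_right d (Nat.lt_two_pow_self).le).trans (Nat.mul_div_le N _)
  have hdecay : (c / 2) ^ N ≤ (1 / 2) ^ d :=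
    calc (c / 2) ^ N ≤ (c / 2) ^ (K * d) := pow_le_pow_of_le_one hc0 (by linarith) hKd
      _ = ((c / 2) ^ K) ^ d := pow_mul _ _ _
      _ ≤ (1 / 2) ^ d := by gcongr
  have : (∑ k ∈ range (m + 1), (N.choose k : ℝ)) * 2 ^ d ≤ 2 ^ N :=
    calc (∑ k ∈ range (m + 1), (N.choose k : ℝ)) * 2 ^ d ≤ c ^ N * 2 ^ d := by
          gcongr; exact sum_range_choose_le_rpow hl0 hl1 hm
      _ = 2 ^ N * ((c / 2) ^ N * 2 ^ d) := by rw [div_pow]; field_simp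
      _ ≤ 2 ^ N * ((1 / 2) ^ d * 2 ^ d) := by gcongr
      _ = 2 ^ N := by rw [← mul_pow]; norm_num
  exact_mod_cast this

section HammingBall

variable {α : Type*} [Fintype α] [DecidableEq α]

theorem card_filter_hammingDist_le (g : α → Bool) (m : ℕ) :
    #{f | hammingDist f g ≤ m} ≤ ∑ k ∈ range (m + 1), (Fintype.card α).choose k := by
  have hinj : Function.Injective fun f : α → Bool => ({i | f i ≠ g i} : Finset α) := by
    intro f₁ f₂ h
    funext i
    have := congrArg (i ∈ ·) h
    simp only [mem_filter, mem_univ, true_and, eq_iff_iff] at this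
    cases h₁ : f₁ i <;> cases h₂ : f₂ i <;> cases g i <;> simp_all
  calc #{f | hammingDist f g ≤ m}
      ≤ #((range (m + 1)).biUnion fun k => powersetCard k (univ : Finset α)) := by
        refine card_le_card_of_injOn _ (fun f hf => ?_) hinj.injOn
        simp only [coe_filter, mem_univ, true_and, Set.mem_ofPred_eq] at hf
        simp only [mem_coe, mem_biUnion, mem_range, mem_powersetCard, subset_univ, true_and]
        exact ⟨_, Nat.lt_succ_of_le hf, rfl⟩
    _ ≤ ∑ k ∈ range (m + 1), #(powersetCard k (univ : Finset α)) := card_biUnion_le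
    _ = ∑ k ∈ range (m + 1), (Fintype.card α).choose k := by simp [card_powersetCard]

theorem exists_forall_lt_hammingDist (F : Finset (α → Bool)) (m : ℕ)
    (hF : #F * ∑ k ∈ range (m + 1), (Fintype.card α).choose k < 2 ^ Fintype.card α) :
    ∃ f : α → Bool, ∀ g ∈ F, m < hammingDist f g := by
  have hcover :
      #(F.biUnion fun g => {f | hammingDist f g ≤ m}) < #(univ : Finset (α → Bool)) :=
    calc _ ≤ ∑ g ∈ F, #{f | hammingDist f g ≤ m} := card_biUnion_le
      _ ≤ ∑ _g ∈ F, ∑ k ∈ range (m + 1), (Fintype.card α).choose k :=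
        sum_le_sum fun g _ => card_filter_hammingDist_le g m
      _ < _ := by simpa using hF
  obtain ⟨f, -, hf⟩ := exists_mem_notMem_of_card_lt_card hcover
  simp only [mem_biUnion, mem_filter, mem_univ, true_and, not_exists, not_and, not_le] at hf
  exact ⟨f, hf⟩

end HammingBall

def decompFamily (p q r u v : ℕ) : Finset (BS p → BS q → BS r → Bool) :=
  univ.image
    fun (abt : (BS p → BS q → BS u) × (BS q → BS r → BS v) × (BS u → BS v → Bool)) x y z =>
      abt.2.2 (abt.1 x y) (abt.2.1 y z)

theorem card_decompFamily_le {p q r u v m : ℕ} (huv : u + v ≤ m) :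
    #(decompFamily p q r u v) ≤ 2 ^ (m * 2 ^ (p + q) + m * 2 ^ (q + r) + 2 ^ m) := by
  refine card_image_le.trans ?_
  simp only [card_univ, Fintype.card_prod, Fintype.card_fun, Fintype.card_bool, Fintype.card_fin,
    ← pow_mul, ← pow_add]
  refine Nat.pow_le_pow_right two_pos ?_
  have hu : u ≤ m := by omega
  have hv : v ≤ m := by omega
  calc _ = u * 2 ^ (p + q) + v * 2 ^ (q + r) + 2 ^ (u + v) := by ring
    _ ≤ _ := by gcongr; norm_num

theorem card_decompBound_le (p q r m : ℕ)
    [DecidablePred fun T : BS p → BS q → BS r → Bool => DecompBound T m] :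
    #{T : BS p → BS q → BS r → Bool | DecompBound T m}
      ≤ (m + 1) ^ 2 * 2 ^ (m * 2 ^ (p + q) + m * 2 ^ (q + r) + 2 ^ m) := by
  set D := (range (m + 1) ×ˢ range (m + 1)).filter fun uv : ℕ × ℕ => uv.1 + uv.2 ≤ m
  have hsub : ({T | DecompBound T m} : Finset (BS p → BS q → BS r → Bool))
      ⊆ D.biUnion fun uv => decompFamily p q r uv.1 uv.2 := by
    intro T hT
    obtain ⟨u, v, huv, a, b, t, hT⟩ := (mem_filter.mp hT).2
    simp only [D, mem_biUnion, mem_filter, mem_product, mem_range, decompFamily, mem_image,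
      mem_univ, true_and, Prod.exists]
    exact ⟨u, v, ⟨⟨by omega, by omega⟩, huv⟩, a, b, t,
      funext₃ fun x y z => (hT x y z).symm⟩
  calc _ ≤ #(D.biUnion fun uv => decompFamily p q r uv.1 uv.2) := card_le_card hsub
    _ ≤ ∑ uv ∈ D, #(decompFamily p q r uv.1 uv.2) := card_biUnion_le
    _ ≤ #D * 2 ^ (m * 2 ^ (p + q) + m * 2 ^ (q + r) + 2 ^ m) :=
        (sum_le_card_nsmul _ _ _ fun uv huv => card_decompFamily_le (mem_filter.mp huv).2).trans
          (smul_eq_mul ..).le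
    _ ≤ _ := by
        gcongr
        exact (card_filter_le _ _).trans (by simp [sq])

theorem mul_two_pow_mul_two_pow_lt {n C r : ℕ} (s : ℕ) (h : Nat.log 2 n + C ≤ r) :
    n * 2 ^ s * 2 ^ C < 2 ^ (s + r + 1) :=
  calc n * 2 ^ s * 2 ^ C < 2 ^ (Nat.log 2 n + 1) * 2 ^ s * 2 ^ C := by
        gcongr; exact Nat.lt_pow_succ_log_self one_lt_two n
    _ = 2 ^ (Nat.log 2 n + C + s + 1) := by ring
    _ ≤ 2 ^ (s + r + 1) := Nat.pow_le_pow_right two_pos (by omega)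

theorem decomp_exponent_lt {p q r C m : ℕ} (hp : Nat.log 2 (p + q + r) + C ≤ p)
    (hr : Nat.log 2 (p + q + r) + C ≤ r) (hm : p + q + r = m + C) :
    m * 2 ^ (p + q) + m * 2 ^ (q + r) + 2 ^ m < 2 ^ (m + 3) := by
  have hmn : m ≤ p + q + r := by omega
  have h₁ : m * 2 ^ (p + q) * 2 ^ C < 2 ^ (m + C + 1) := by
    rw [← hm]
    exact (mul_two_pow_mul_two_pow_lt (p + q) hr).trans_le' (by gcongr)
  have h₂ : m * 2 ^ (q + r) * 2 ^ C < 2 ^ (m + C + 1) := by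
    rw [← hm, show p + q + r + 1 = q + r + p + 1 by ring]
    exact (mul_two_pow_mul_two_pow_lt (q + r) hp).trans_le' (by gcongr)
  refine Nat.lt_of_mul_lt_mul_right (a := 2 ^ C) ?_
  calc (m * 2 ^ (p + q) + m * 2 ^ (q + r) + 2 ^ m) * 2 ^ C
      = m * 2 ^ (p + q) * 2 ^ C + m * 2 ^ (q + r) * 2 ^ C + 2 ^ (m + C) := by ring
    _ < 2 ^ (m + C + 1) + 2 ^ (m + C + 1) + 2 ^ (m + C) := by gcongr
    _ ≤ 2 ^ (m + 3) * 2 ^ C := by rw [← pow_add]; ring_nf; omega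

theorem card_decompBound_mul_sum_choose_lt {p q r K m m₀ : ℕ}
    [DecidablePred fun T : BS p → BS q → BS r → Bool => DecompBound T m]
    (hp : Nat.log 2 (p + q + r) + (K + 4) ≤ p) (hr : Nat.log 2 (p + q + r) + (K + 4) ≤ r)
    (hm : p + q + r = m + (K + 4))
    (hK : (∑ k ∈ range (m₀ + 1), (2 ^ (p + q + r)).choose k) * 2 ^ (2 ^ (p + q + r) / 2 ^ K)
      ≤ 2 ^ 2 ^ (p + q + r)) :
    #{T : BS p → BS q → BS r → Bool | DecompBound T m} *
      ∑ k ∈ range (m₀ + 1), (2 ^ (p + q + r)).choose k < 2 ^ 2 ^ (p + q + r) := by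
  set E := m * 2 ^ (p + q) + m * 2 ^ (q + r) + 2 ^ m
  have hE : E < 2 ^ (m + 3) := decomp_exponent_lt hp hr hm
  have hlog : (m + 1) ^ 2 < 2 ^ 2 ^ (m + 3) := by
    have hm2 : m < 2 ^ m := Nat.lt_two_pow_self
    calc (m + 1) ^ 2 < (2 ^ (m + 1)) ^ 2 := by gcongr; exact Nat.lt_two_pow_self
      _ ≤ 2 ^ 2 ^ (m + 3) := by
        rw [← pow_mul]; exact Nat.pow_le_pow_right two_pos (by ring_nf; omega)
  have hdiv : 2 ^ (p + q + r) / 2 ^ K = 2 ^ (m + 4) := by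
    rw [hm, Nat.pow_div (by omega) two_pos]; congr 1; omega
  rw [hdiv] at hK
  refine Nat.lt_of_mul_lt_mul_right (a := 2 ^ 2 ^ (m + 4)) ?_
  calc _ ≤ (m + 1) ^ 2 * 2 ^ E * (∑ k ∈ range (m₀ + 1), (2 ^ (p + q + r)).choose k)
        * 2 ^ 2 ^ (m + 4) := by gcongr; exact card_decompBound_le p q r m
    _ ≤ (m + 1) ^ 2 * 2 ^ E * 2 ^ 2 ^ (p + q + r) := by rw [mul_assoc]; gcongr
    _ < 2 ^ 2 ^ (m + 3) * 2 ^ 2 ^ (m + 3) * 2 ^ 2 ^ (p + q + r) := by gcongr; exact one_lt_two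
    _ = _ := by ring

/-- For every `0 < ε < 1/2` there is a constant `C` such that whenever
`p, r ≥ log₂ n + C` (with `n = p + q + r`), there is a predicate `T` such that every
predicate `T'` of decomposition complexity at most `n - C` differs from `T` on more
than `ε·2^n` of the `2^n` input triples. -/
theorem exists_predicate_hard_to_approximate (ε : ℝ) (hε0 : 0 < ε) (hε : ε < 1 / 2) :
    ∃ C : ℕ, ∀ p q r : ℕ,
      Nat.log 2 (p + q + r) + C ≤ p → Nat.log 2 (p + q + r) + C ≤ r →
      ∃ T : BS p → BS q → BS r → Bool,
        ∀ T' : BS p → BS q → BS r → Bool, DecompBound T' (p + q + r - C) →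
          ε * 2 ^ (p + q + r) <
            ((Finset.univ.filter (fun w : BS p × BS q × BS r =>
                T w.1 w.2.1 w.2.2 ≠ T' w.1 w.2.1 w.2.2)).card : ℝ) := by
  classical
  obtain ⟨K, hK⟩ := exists_sum_choose_mul_two_pow_le hε0.le hε
  refine ⟨K + 4, fun p q r hp hr => ?_⟩
  obtain ⟨m, hm⟩ : ∃ m, p + q + r = m + (K + 4) := ⟨p + q + r - (K + 4), by omega⟩
  set m₀ := ⌊ε * 2 ^ (p + q + r)⌋₊
  have hm₀ : (m₀ : ℝ) ≤ ε * ((2 ^ (p + q + r) : ℕ) : ℝ) := by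
    push_cast; exact Nat.floor_le (by positivity)
  set F : Finset (BS p × BS q × BS r → Bool) :=
    ({T | DecompBound T m} : Finset _).image fun T w => T w.1 w.2.1 w.2.2
  have hF : #F * ∑ k ∈ range (m₀ + 1), (Fintype.card (BS p × BS q × BS r)).choose k
      < 2 ^ Fintype.card (BS p × BS q × BS r) := by
    have hcard : Fintype.card (BS p × BS q × BS r) = 2 ^ (p + q + r) := by
      simp [pow_add, mul_assoc]
    rw [hcard]
    exact (Nat.mul_le_mul_right _ card_image_le).trans_lt
      (card_decompBound_mul_sum_choose_lt hp hr hm (hK _ _ hm₀))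
  obtain ⟨f, hf⟩ := exists_forall_lt_hammingDist F m₀ hF
  refine ⟨fun x y z => f (x, y, z), fun T' hT' => ?_⟩
  rw [hm, Nat.add_sub_cancel] at hT'
  have hfar := hf _ (mem_image_of_mem _ (mem_filter.mpr ⟨mem_univ T', hT'⟩))
  calc ε * 2 ^ (p + q + r) < m₀ + 1 := Nat.lt_floor_add_one _
    _ ≤ _ := mod_cast hfar
end

section
/- For every real ε with 0 < ε < 1/2 there exists δ > 0 such that for every natural number k the following holds: if u, v are natural numbers and a : B^k × B^(2^(2k)) → B^u, b : B^(2^(2k)) × B^k → B^v, t : B^u × B^v → Bool satisfy t(a(x,y), b(y,z)) = y(x,z) for at least (1−ε)·2^(2k + 2^(2k)) of all triples (x,y,z), then u + v ≥ δ·2^k. -/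
open Finset Real

theorem Real.card_mul_exp_sum_div_card_le_sum_exp {α : Type*} [Fintype α] (f : α → ℝ) :
    Fintype.card α * exp ((∑ a, f a) / Fintype.card α) ≤ ∑ a, exp (f a) := by
  obtain _ | _ := isEmpty_or_nonempty α
  · simp
  have hn : (0 : ℝ) < Fintype.card α := by exact_mod_cast Fintype.card_pos
  have hjensen := convexOn_exp.map_sum_le (t := univ)
    (w := fun _ => (Fintype.card α : ℝ)⁻¹) (p := f) (fun _ _ => by positivity)
    (by simp [hn.ne']) (fun _ _ => Set.mem_univ _)
  simp only [smul_eq_mul, ← mul_sum] at hjensen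
  rw [div_eq_inv_mul]
  calc _ ≤ (Fintype.card α : ℝ) * ((Fintype.card α : ℝ)⁻¹ * ∑ a, exp (f a)) := by
        gcongr
    _ = ∑ a, exp (f a) := by field_simp

section HammingWeight

variable {ι : Type*} [Fintype ι] [DecidableEq ι]

theorem sum_pow_hammingDist {R : Type*} [CommSemiring R] (p : ι → Bool) (θ : R) :
    ∑ y : ι → Bool, θ ^ hammingDist y p = (1 + θ) ^ Fintype.card ι := by
  have hprod (y : ι → Bool) :
      θ ^ hammingDist y p = ∏ i, if y i ≠ p i then θ else 1 := by
    rw [prod_ite, prod_const, prod_const, one_pow, mul_one]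
    rfl
  simp_rw [hprod]
  rw [← Fintype.prod_sum (fun i b => if b ≠ p i then θ else 1), Fintype.card_eq_sum_ones,
    ← prod_pow_eq_pow_sum]
  refine prod_congr rfl fun i _ => ?_
  cases p i <;> simp [add_comm]

variable {T : Type*} [Fintype T] (g : (ι → Bool) → T) (F : T → ι → Bool)

theorem sum_pow_hammingDist_comp_le {θ : ℝ} (hθ : 0 ≤ θ) :
    ∑ y, θ ^ hammingDist y (F (g y)) ≤ Fintype.card T * (1 + θ) ^ Fintype.card ι :=
  calc ∑ y, θ ^ hammingDist y (F (g y))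
      ≤ ∑ y, ∑ τ, θ ^ hammingDist y (F τ) :=
        sum_le_sum fun y _ =>
          single_le_sum (f := fun τ => θ ^ hammingDist y (F τ)) (fun τ _ => by positivity)
            (mem_univ (g y))
    _ = Fintype.card T * (1 + θ) ^ Fintype.card ι := by
        rw [sum_comm]
        simp [sum_pow_hammingDist]

theorem mul_card_le_log_card_of_sum_hammingDist_le {ε θ : ℝ} (hθ0 : 0 < θ) (hθ1 : θ ≤ 1)
    (hdist : ∑ y, (hammingDist y (F (g y)) : ℝ) ≤
      ε * Fintype.card ι * 2 ^ Fintype.card ι) :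
    (log 2 + ε * log θ - log (1 + θ)) * Fintype.card ι ≤ log (Fintype.card T) := by
  set N := Fintype.card ι
  have hcardY : (Fintype.card (ι → Bool) : ℝ) = 2 ^ N := by simp [N]
  have hlogθ : log θ ≤ 0 := log_nonpos hθ0.le hθ1
  have hT : (Fintype.card T : ℝ) ≠ 0 := by
    have : Nonempty T := ⟨g default⟩
    exact_mod_cast Fintype.card_ne_zero
  have hweight : 2 ^ N * exp (ε * N * log θ) ≤ Fintype.card T * (1 + θ) ^ N :=
    calc 2 ^ N * exp (ε * N * log θ)
        ≤ Fintype.card (ι → Bool) *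
            exp ((∑ y, hammingDist y (F (g y)) * log θ) / Fintype.card (ι → Bool)) := by
          rw [hcardY, ← sum_mul]
          gcongr
          rw [le_div_iff₀ (by positivity), mul_right_comm]
          exact mul_le_mul_of_nonpos_right hdist hlogθ
      _ ≤ ∑ y, exp (hammingDist y (F (g y)) * log θ) :=
          card_mul_exp_sum_div_card_le_sum_exp _
      _ = ∑ y, θ ^ hammingDist y (F (g y)) := by
          simp only [exp_nat_mul, exp_log hθ0]
      _ ≤ Fintype.card T * (1 + θ) ^ N := sum_pow_hammingDist_comp_le g F hθ0.le
  have hlog := log_le_log (by positivity) hweight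
  rw [log_mul (by positivity) (by positivity), log_mul hT (by positivity), log_pow, log_pow,
    log_exp] at hlog
  linarith

theorem log_two_sub_binEntropy_mul_card_le_log_card {ε : ℝ} (hε0 : 0 < ε) (hε : ε ≤ 1 / 2)
    (hdist : ∑ y, (hammingDist y (F (g y)) : ℝ) ≤
      ε * Fintype.card ι * 2 ^ Fintype.card ι) :
    (log 2 - binEntropy ε) * Fintype.card ι ≤ log (Fintype.card T) := by
  have h1ε : 0 < 1 - ε := by linarith
  convert mul_card_le_log_card_of_sum_hammingDist_le g F (θ := ε / (1 - ε)) (by positivity)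
    (by rw [div_le_one h1ε]; linarith) hdist using 2
  have hθ : 1 + ε / (1 - ε) = (1 - ε)⁻¹ := by field_simp; ring
  rw [binEntropy, hθ, log_div hε0.ne' h1ε.ne', log_inv, log_inv]
  ring

end HammingWeight

section Indexing

variable {X Z I A B : Type*} [Fintype X] [Fintype Z] [Fintype I] [DecidableEq I]
  (e : X × Z ≃ I) (a : X → (I → Bool) → A) (b : (I → Bool) → Z → B)
  (t : A → B → Bool)

theorem sum_hammingDist_eq_card_filter_ne :
    ∑ y : I → Bool, hammingDist y (fun i => t (a (e.symm i).1 y) (b y (e.symm i).2)) =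
      #{w : X × (I → Bool) × Z |
        t (a w.1 w.2.1) (b w.2.1 w.2.2) ≠ w.2.1 (e (w.1, w.2.2))} := by
  simp only [hammingDist, card_filter, ← e.sum_comp, Equiv.symm_apply_apply,
    Fintype.sum_prod_type, ne_comm (a := t _ _)]
  rw [sum_comm]

theorem log_two_sub_binEntropy_mul_card_le_of_indexing [Fintype A] [Fintype B] {ε : ℝ}
    (hε0 : 0 < ε) (hε : ε ≤ 1 / 2)
    (hagree : (1 - ε) * Fintype.card (X × (I → Bool) × Z) ≤
      (#{w : X × (I → Bool) × Z |
        t (a w.1 w.2.1) (b w.2.1 w.2.2) = w.2.1 (e (w.1, w.2.2))} : ℝ)) :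
    (log 2 - binEntropy ε) * Fintype.card I ≤
      Fintype.card X * log (Fintype.card A) + Fintype.card Z * log (Fintype.card B) := by
  classical
  have hcard :
      (Fintype.card (X × (I → Bool) × Z) : ℝ) = Fintype.card I * 2 ^ Fintype.card I := by
    simp [Fintype.card_congr e.symm]
    ring
  have hdist : ∑ y : I → Bool,
      (hammingDist y (fun i => t (a (e.symm i).1 y) (b y (e.symm i).2)) : ℝ) ≤
        ε * Fintype.card I * 2 ^ Fintype.card I := by
    have hsplit : (#{w : X × (I → Bool) × Z |
          t (a w.1 w.2.1) (b w.2.1 w.2.2) = w.2.1 (e (w.1, w.2.2))} : ℝ) +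
        #{w : X × (I → Bool) × Z |
          t (a w.1 w.2.1) (b w.2.1 w.2.2) ≠ w.2.1 (e (w.1, w.2.2))} =
          Fintype.card (X × (I → Bool) × Z) := by
      exact_mod_cast card_filter_add_card_filter_not _
    rw [← Nat.cast_sum, sum_hammingDist_eq_card_filter_ne]
    rw [hcard] at hsplit hagree
    linarith
  have hA : Fintype.card (X → A) ≠ 0 := @Fintype.card_ne_zero _ _ ⟨fun x => a x default⟩
  have hB : Fintype.card (Z → B) ≠ 0 := @Fintype.card_ne_zero _ _ ⟨fun z => b default z⟩
  calc (log 2 - binEntropy ε) * Fintype.card I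
      ≤ log (Fintype.card ((X → A) × (Z → B))) :=
        log_two_sub_binEntropy_mul_card_le_log_card (fun y => (fun x => a x y, fun z => b y z))
          (fun τ i => t (τ.1 (e.symm i).1) (τ.2 (e.symm i).2)) hε0 hε hdist
    _ = Fintype.card X * log (Fintype.card A) + Fintype.card Z * log (Fintype.card B) := by
        rw [Fintype.card_prod, Nat.cast_mul,
          log_mul (by exact_mod_cast hA) (by exact_mod_cast hB)]
        simp [log_pow]

end Indexing

/-- For every `0 < ε < 1/2` there is a `δ > 0` such that for every `k`: if
`t(a(x,y), b(y,z))` agrees with the indexing predicate `y(x,z)` on at least a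
`(1 - ε)`-fraction of the `2^(2k + 2^(2k))` input triples, then `u + v ≥ δ·2^k`. -/
theorem approximate_indexing_lower_bound (ε : ℝ) (hε0 : 0 < ε) (hε : ε < 1 / 2) :
    ∃ δ : ℝ, 0 < δ ∧
      ∀ (k : ℕ) (e : (BS k × BS k) ≃ Fin (2 ^ (2 * k)))
        (u v : ℕ) (a : BS k → BS (2 ^ (2 * k)) → BS u)
        (b : BS (2 ^ (2 * k)) → BS k → BS v) (t : BS u → BS v → Bool),
        (1 - ε) * 2 ^ (2 * k + 2 ^ (2 * k)) ≤
          ((Finset.univ.filter (fun w : BS k × BS (2 ^ (2 * k)) × BS k =>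
              t (a w.1 w.2.1) (b w.2.1 w.2.2) = w.2.1 (e (w.1, w.2.2)))).card : ℝ) →
        δ * 2 ^ k ≤ (u + v : ℝ) := by
  have hlog2 : 0 < log 2 := log_pos one_lt_two
  have hgap : 0 < log 2 - binEntropy ε :=
    sub_pos.2 (binEntropy_lt_log_two.2 (by norm_num; linarith))
  refine ⟨(log 2 - binEntropy ε) / log 2, div_pos hgap hlog2, ?_⟩
  intro k e u v a b t hagree
  have hcard : (Fintype.card (BS k × BS (2 ^ (2 * k)) × BS k) : ℝ) =
      2 ^ (2 * k + 2 ^ (2 * k)) := by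
    simp [pow_add]
    ring
  have hbound :
      (log 2 - binEntropy ε) * (2 ^ k) ^ 2 ≤ 2 ^ k * (u * log 2) + 2 ^ k * (v * log 2) := by
    simpa [log_pow, pow_mul'] using
      log_two_sub_binEntropy_mul_card_le_of_indexing e a b t hε0 hε.le (hcard ▸ hagree)
  rw [div_mul_eq_mul_div, div_le_iff₀ hlog2]
  refine le_of_mul_le_mul_left ?_ (by positivity : (0 : ℝ) < 2 ^ k)
  linear_combination hbound
end

section
/- Let n, m, c be natural numbers with 2^(3c) ≤ 2^(n−1), and fix A, B : B^n × B^n → Finset(B^m) with all values of cardinality at most 2^c and F : B^m × B^m → Finset(B^n) with all values of cardinality at most 2^c. Then the number of functions T : B^n × B^n × B^n → B^n covered by (A, B, F) is at most 2^((n−1)·2^(3n)). -/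
/-- The triple `(A, B, F)` of multi-valued functions covers `T` if for all `x, y, z`
there are `a ∈ A(x,y)` and `b ∈ B(y,z)` with `T(x,y,z) ∈ F(a,b)`. -/
def Covers {n m : ℕ} (A B : BS n → BS n → Finset (BS m))
    (F : BS m → BS m → Finset (BS n)) (T : BS n → BS n → BS n → BS n) : Prop :=
  ∀ x y z, ∃ a ∈ A x y, ∃ b ∈ B y z, T x y z ∈ F a b

/-- If `2^(3c) ≤ 2^(n-1)` and `A, B, F` have values of cardinality at most `2^c`,
then the number of functions `T` covered by `(A, B, F)` is at most `2^((n-1)·2^(3n))`. -/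
theorem count_covered_functions (n m c : ℕ) (h1 : 2 ^ (3 * c) ≤ 2 ^ (n - 1))
    (A B : BS n → BS n → Finset (BS m)) (F : BS m → BS m → Finset (BS n))
    (hA : ∀ x y, (A x y).card ≤ 2 ^ c)
    (hB : ∀ y z, (B y z).card ≤ 2 ^ c)
    (hF : ∀ a b, (F a b).card ≤ 2 ^ c) :
    Nat.card {T : BS n → BS n → BS n → BS n // Covers A B F T}
      ≤ 2 ^ ((n - 1) * 2 ^ (3 * n)) := by
  classical
  set S : BS n → BS n → BS n → Finset (BS n) :=
    fun x y z => (A x y).biUnion fun a => (B y z).biUnion fun b => F a b with hS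
  have hScard : ∀ x y z, (S x y z).card ≤ 2 ^ (n - 1) := by
    intro x y z
    refine le_trans ?_ h1
    calc (S x y z).card ≤ ∑ a ∈ A x y, ((B y z).biUnion fun b => F a b).card :=
          Finset.card_biUnion_le
      _ ≤ ∑ a ∈ A x y, ∑ b ∈ B y z, (F a b).card := by
          exact Finset.sum_le_sum fun a _ => Finset.card_biUnion_le
      _ ≤ ∑ a ∈ A x y, ∑ b ∈ B y z, 2 ^ c := by
          exact Finset.sum_le_sum fun a _ => Finset.sum_le_sum fun b _ => hF a b
      _ = (A x y).card * ((B y z).card * 2 ^ c) := by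
          simp [Finset.sum_const, mul_comm, Nat.smul_one_eq_cast]
      _ ≤ 2 ^ c * (2 ^ c * 2 ^ c) := by
          exact Nat.mul_le_mul (hA x y) (Nat.mul_le_mul_right _ (hB y z))
      _ = 2 ^ (3 * c) := by ring
  -- injection into the pi type
  have hinj : Function.Injective
      (fun (T : {T : BS n → BS n → BS n → BS n // Covers A B F T}) =>
        (fun x y z => (⟨T.1 x y z, by
          obtain ⟨a, ha, b, hb, h⟩ := T.2 x y z
          exact Finset.mem_biUnion.2 ⟨a, ha, Finset.mem_biUnion.2 ⟨b, hb, h⟩⟩⟩ :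
          {v // v ∈ S x y z})) :
        {T : BS n → BS n → BS n → BS n // Covers A B F T} →
          ∀ x y z : BS n, {v // v ∈ S x y z}) := by
    intro T1 T2 h
    ext x y z i
    have := congrFun (congrFun (congrFun h x) y) z
    exact congrFun (congrArg Subtype.val this) i
  have hle := Nat.card_le_card_of_injective _ hinj
  refine le_trans hle ?_
  rw [Nat.card_eq_fintype_card]
  have hpow : ∀ x y z : BS n, Fintype.card {v // v ∈ S x y z} ≤ 2 ^ (n - 1) := by
    intro x y z
    rw [Fintype.card_coe]
    exact hScard x y z
  calc Fintype.card (∀ x y z : BS n, {v // v ∈ S x y z})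
      ≤ ∏ x : BS n, ∏ y : BS n, ∏ z : BS n, 2 ^ (n - 1) := by
        rw [Fintype.card_pi]
        refine Finset.prod_le_prod' fun x _ => ?_
        rw [Fintype.card_pi]
        refine Finset.prod_le_prod' fun y _ => ?_
        rw [Fintype.card_pi]
        exact Finset.prod_le_prod' fun z _ => hpow x y z
    _ = 2 ^ ((n - 1) * 2 ^ (3 * n)) := by
        have hcard : Fintype.card (BS n) = 2 ^ n := by
          simp [BS]
        simp only [Finset.prod_const, Finset.card_univ, hcard, ← pow_mul]
        congr 1
        rw [show 3 * n = n + (n + n) by ring, pow_add, pow_add]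
        ring
end

section
/- For every real δ with 0 < δ < 1 there exists a constant C such that for all natural numbers n ≥ C, m, c with 3c ≤ n − C and 2m + c ≤ 3n − C·log₂(n + 2), there exists a function T : B^n × B^n × B^n → B^n with the following property: for every A, B : B^n × B^n → Finset(B^m) with all values of cardinality at most 2^c and every F : B^m × B^m → Finset(B^n) with all values of cardinality at most 2^c, the number of triples (x,y,z) ∈ B^n × B^n × B^n for which there exist a ∈ A(x,y) and b ∈ B(y,z) with T(x,y,z) ∈ F(a,b) is less than δ·2^(3n). -/
/-!
A union bound over all `(A, B, F)`. Fix `(A, B, F)` with values of size at most `2 ^ c`. At each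
of the `N = 2 ^ (3n)` triples `w`, the values of `T w` admitting a decomposition form a set of
size at most `2 ^ (3c)`, so at most `(N choose K) · 2 ^ (3cK) · 2 ^ (n(N - K))` functions `T`
admit a decomposition at `K` or more triples. There are at most `2 ^ e` such `(A, B, F)`, with
`e = 2 (m + 1) 2 ^ (c + 2n) + (n + 1) 2 ^ (c + 2m)`, and for `K = ⌈δN⌉` the hypotheses on
`n, m, c` give `e + N + 3cK < nK`; then the bad functions do not exhaust all `2 ^ (nN)` of them.
-/

open Finset

theorem card_filter_card_le_le {α : Type*} [Fintype α] [DecidableEq α] (k : ℕ) :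
    #{s : Finset α | #s ≤ k} ≤ (Fintype.card α + 1) ^ k := by
  calc #{s : Finset α | #s ≤ k}
      ≤ #(univ : Finset (Fin k → Option α)) := by
        refine card_le_card_of_injOn (fun s i => s.toList[(i : ℕ)]?)
          (fun _ _ => mem_coe.2 (mem_univ _)) ?_
        intro s hs t ht hst
        simp only [coe_filter, mem_univ, true_and, Set.mem_ofPred_eq] at hs ht
        rw [← toList_toFinset s, ← toList_toFinset t]
        congr 1
        refine List.ext_getElem? fun i => ?_
        by_cases hi : i < k
        · exact congrFun hst ⟨i, hi⟩
        · rw [List.getElem?_eq_none (by simp; omega), List.getElem?_eq_none (by simp; omega)]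
    _ = (Fintype.card α + 1) ^ k := by simp

theorem card_filter_le_card_filter_mem_le {I V : Type*} [Fintype I] [DecidableEq I] [Fintype V]
    [DecidableEq V] (S : I → Finset V) {D : ℕ} (hS : ∀ i, #(S i) ≤ D) (K : ℕ) :
    #{T : I → V | K ≤ #{i | T i ∈ S i}}
      ≤ (Fintype.card I).choose K * (D ^ K * Fintype.card V ^ (Fintype.card I - K)) := by
  have hcover : ({T : I → V | K ≤ #{i | T i ∈ S i}} : Finset (I → V))
      ⊆ (univ.powersetCard K).biUnion
          fun W => Fintype.piFinset fun i => if i ∈ W then S i else univ := by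
    intro T hT
    obtain ⟨W, hWhit, hWcard⟩ := exists_subset_card_eq (mem_filter.1 hT).2
    refine mem_biUnion.2 ⟨W, mem_powersetCard.2 ⟨subset_univ _, hWcard⟩, ?_⟩
    refine Fintype.mem_piFinset.2 fun i => ?_
    split_ifs with hi
    · exact (mem_filter.1 (hWhit hi)).2
    · exact mem_univ _
  have hbox : ∀ W ∈ univ.powersetCard K,
      #(Fintype.piFinset fun i => if i ∈ W then S i else univ)
        ≤ D ^ K * Fintype.card V ^ (Fintype.card I - K) := by
    intro W hW
    replace hW := (mem_powersetCard.1 hW).2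
    rw [Fintype.card_piFinset]
    simp only [apply_ite card, card_univ]
    rw [prod_ite, prod_const, filter_mem_eq_of_subset (subset_univ W), filter_not,
      filter_mem_eq_of_subset (subset_univ W), card_univ_sdiff, hW]
    gcongr
    exact (prod_le_pow_card W _ D fun i _ => hS i).trans_eq (by rw [hW])
  calc _ ≤ _ := card_le_card hcover
    _ ≤ _ := card_biUnion_le_card_mul _ _ _ hbox
    _ = _ := by rw [card_powersetCard, card_univ]

theorem exists_forall_card_filter_mem_lt {ι I V : Type*} [Fintype I] [DecidableEq I] [Fintype V]
    [DecidableEq V] (P : Finset ι) (S : ι → I → Finset V) {D : ℕ}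
    (hS : ∀ p ∈ P, ∀ i, #(S p i) ≤ D) (K : ℕ)
    (hP : #P * ((Fintype.card I).choose K * (D ^ K * Fintype.card V ^ (Fintype.card I - K)))
      < Fintype.card V ^ Fintype.card I) :
    ∃ T : I → V, ∀ p ∈ P, #{i | T i ∈ S p i} < K := by
  by_contra! hbad
  have hcover : (univ : Finset (I → V)) ⊆ P.biUnion fun p => {T | K ≤ #{i | T i ∈ S p i}} :=
    fun T _ => by simpa using hbad T
  have := (card_le_card hcover).trans
    (card_biUnion_le_card_mul _ _ _ fun p hp => card_filter_le_card_filter_mem_le _ (hS p hp) K)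
  simp only [card_univ, Fintype.card_fun] at this
  omega

section BoundedFamilies

variable (X Y α : Type*) [Fintype X] [DecidableEq X] [Fintype Y] [DecidableEq Y] [Fintype α]

def boundedFamilies (k : ℕ) : Finset (X → Y → Finset α) :=
  Fintype.piFinset fun _ => Fintype.piFinset fun _ => {s | #s ≤ k}

variable {X Y α}

theorem mem_boundedFamilies {k : ℕ} {A : X → Y → Finset α} :
    A ∈ boundedFamilies X Y α k ↔ ∀ x y, #(A x y) ≤ k := by
  simp [boundedFamilies]

theorem card_boundedFamilies_le [DecidableEq α] (k : ℕ) :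
    #(boundedFamilies X Y α k)
      ≤ (Fintype.card α + 1) ^ (k * Fintype.card X * Fintype.card Y) := by
  simp only [boundedFamilies, Fintype.card_piFinset, prod_const, card_univ]
  rw [mul_assoc, pow_mul, ← pow_mul, mul_comm]
  exact Nat.pow_le_pow_left (card_filter_card_le_le k) _

end BoundedFamilies

section Decomposition

variable {X Y Z M R : Type*} [DecidableEq R]

def decompSet (A : X → Y → Finset M) (B : Y → Z → Finset M) (F : M → M → Finset R)
    (x : X) (y : Y) (z : Z) : Finset R :=
  (A x y).biUnion fun a => (B y z).biUnion fun b => F a b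

theorem mem_decompSet {A : X → Y → Finset M} {B : Y → Z → Finset M} {F : M → M → Finset R}
    {x : X} {y : Y} {z : Z} {r : R} :
    r ∈ decompSet A B F x y z ↔ ∃ a ∈ A x y, ∃ b ∈ B y z, r ∈ F a b := by
  simp [decompSet]

theorem card_decompSet_le {A : X → Y → Finset M} {B : Y → Z → Finset M}
    {F : M → M → Finset R} {kA kB kF : ℕ} (hA : ∀ x y, #(A x y) ≤ kA)
    (hB : ∀ y z, #(B y z) ≤ kB) (hF : ∀ a b, #(F a b) ≤ kF) (x : X) (y : Y) (z : Z) :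
    #(decompSet A B F x y z) ≤ kA * (kB * kF) :=
  calc #(decompSet A B F x y z) ≤ #(A x y) * (kB * kF) :=
        card_biUnion_le_card_mul _ _ _ fun a _ =>
          (card_biUnion_le_card_mul _ _ _ fun b _ => hF a b).trans
            (Nat.mul_le_mul_right _ (hB y z))
    _ ≤ kA * (kB * kF) := Nat.mul_le_mul_right _ (hA x y)

end Decomposition

theorem card_BS_s12 (n : ℕ) : Fintype.card (BS n) = 2 ^ n := by
  simp

theorem card_BS_cube (n : ℕ) : Fintype.card (BS n × BS n × BS n) = 2 ^ (3 * n) := by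
  simp only [Fintype.card_prod, card_BS_s12]
  ring

theorem card_boundedFamilies_BS_le (n m k : ℕ) :
    #(boundedFamilies (BS n) (BS n) (BS m) k) ≤ 2 ^ ((m + 1) * k * 2 ^ n * 2 ^ n) := by
  calc _ ≤ _ := card_boundedFamilies_le k
    _ ≤ (2 ^ (m + 1)) ^ (k * 2 ^ n * 2 ^ n) := by
      rw [card_BS_s12, card_BS_s12]
      gcongr
      simp [pow_succ]
    _ = _ := by rw [← pow_mul]; ring_nf

theorem exists_function_card_filter_decomp_lt {n m c K : ℕ} (hK : K ≤ 2 ^ (3 * n))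
    (hexp : 2 * ((m + 1) * 2 ^ c * 2 ^ n * 2 ^ n) + (n + 1) * 2 ^ c * 2 ^ m * 2 ^ m
      + 2 ^ (3 * n) + 3 * c * K < n * K) :
    ∃ T : BS n → BS n → BS n → BS n,
      ∀ (A B : BS n → BS n → Finset (BS m)) (F : BS m → BS m → Finset (BS n)),
        (∀ x y, #(A x y) ≤ 2 ^ c) → (∀ y z, #(B y z) ≤ 2 ^ c) → (∀ a b, #(F a b) ≤ 2 ^ c) →
        #{w : BS n × BS n × BS n |
          ∃ a ∈ A w.1 w.2.1, ∃ b ∈ B w.2.1 w.2.2, T w.1 w.2.1 w.2.2 ∈ F a b} < K := by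
  set P := boundedFamilies (BS n) (BS n) (BS m) (2 ^ c) ×ˢ
    boundedFamilies (BS n) (BS n) (BS m) (2 ^ c) ×ˢ boundedFamilies (BS m) (BS m) (BS n) (2 ^ c)
  have hS : ∀ p ∈ P, ∀ w : BS n × BS n × BS n,
      #(decompSet p.1 p.2.1 p.2.2 w.1 w.2.1 w.2.2) ≤ 2 ^ (3 * c) := by
    simp only [P, mem_product, mem_boundedFamilies]
    rintro p ⟨hA, hB, hF⟩ w
    exact (card_decompSet_le hA hB hF _ _ _).trans_eq (by ring)
  set e := 2 * ((m + 1) * 2 ^ c * 2 ^ n * 2 ^ n) + (n + 1) * 2 ^ c * 2 ^ m * 2 ^ m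
  have hP : #P ≤ 2 ^ e := by
    simp only [P, card_product]
    calc _ ≤ _ := Nat.mul_le_mul (card_boundedFamilies_BS_le n m _) (Nat.mul_le_mul
          (card_boundedFamilies_BS_le n m _) (card_boundedFamilies_BS_le m n _))
      _ = 2 ^ e := by rw [← pow_add, ← pow_add]; simp only [e]; ring_nf
  have hcount : #P * ((Fintype.card (BS n × BS n × BS n)).choose K *
      ((2 ^ (3 * c)) ^ K * Fintype.card (BS n) ^ (Fintype.card (BS n × BS n × BS n) - K)))
      < Fintype.card (BS n) ^ Fintype.card (BS n × BS n × BS n) := by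
    have hcube : n * (2 ^ (3 * n) - K) + n * K = n * 2 ^ (3 * n) := by
      rw [← mul_add, Nat.sub_add_cancel hK]
    rw [card_BS_cube, card_BS_s12]
    calc _ ≤ 2 ^ e * (2 ^ 2 ^ (3 * n) * ((2 ^ (3 * c)) ^ K * (2 ^ n) ^ (2 ^ (3 * n) - K))) := by
          gcongr
          exact Nat.choose_le_two_pow _ _
      _ = 2 ^ (e + 2 ^ (3 * n) + 3 * c * K + n * (2 ^ (3 * n) - K)) := by
          simp only [pow_add, pow_mul, mul_assoc]
      _ < 2 ^ (n * 2 ^ (3 * n)) := Nat.pow_lt_pow_right one_lt_two (by omega)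
      _ = _ := pow_mul _ _ _
  obtain ⟨T, hT⟩ := exists_forall_card_filter_mem_lt P _ hS K hcount
  refine ⟨fun x y z => T (x, y, z), fun A B F hA hB hF => ?_⟩
  simpa [mem_decompSet] using hT (A, B, F) (by simp [P, mem_boundedFamilies, hA, hB, hF])

theorem three_mul_log_add_le {n : ℕ} (hn : 62 ≤ n) : 3 * Nat.log 2 (n + 2) + 22 ≤ n := by
  set L := Nat.log 2 (n + 2)
  have hL : 6 ≤ L := Nat.le_log_of_pow_le one_lt_two (by norm_num; omega)
  have hpow : 2 ^ L ≤ n + 2 := Nat.pow_log_le_self 2 (by omega)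
  have hsplit : 2 ^ L = 2 ^ 6 * 2 ^ (L - 6) := by rw [← pow_add, Nat.add_sub_cancel' hL]
  have := @Nat.lt_two_pow_self (L - 6)
  omega

theorem eight_mul_le_two_pow {n m c L : ℕ} (hnL : n < 2 ^ L) (hm : 2 * m ≤ 3 * n)
    (hc : L + c + 4 ≤ n) : 8 * ((m + 1) * 2 ^ c * 2 ^ n * 2 ^ n) ≤ 2 ^ (3 * n) :=
  calc 8 * ((m + 1) * 2 ^ c * 2 ^ n * 2 ^ n)
        ≤ 2 ^ 3 * (2 ^ (L + 1) * 2 ^ c * 2 ^ n * 2 ^ n) := by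
        gcongr
        · norm_num
        · rw [pow_succ]; omega
    _ = 2 ^ (L + c + 4 + 2 * n) := by ring
    _ ≤ 2 ^ (3 * n) := Nat.pow_le_pow_right two_pos (by omega)

theorem four_mul_le_two_pow {n m c L : ℕ} (hnL : n < 2 ^ L) (hmc : L + 2 * m + c + 2 ≤ 3 * n) :
    4 * ((n + 1) * 2 ^ c * 2 ^ m * 2 ^ m) ≤ 2 ^ (3 * n) :=
  calc 4 * ((n + 1) * 2 ^ c * 2 ^ m * 2 ^ m)
        ≤ 2 ^ 2 * (2 ^ L * 2 ^ c * 2 ^ m * 2 ^ m) := by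
        gcongr
        · norm_num
        · omega
    _ = 2 ^ (L + 2 * m + c + 2) := by ring
    _ ≤ 2 ^ (3 * n) := Nat.pow_le_pow_right two_pos hmc

theorem count_exponent_lt {n m c C K : ℕ} (hC : 62 ≤ C) (hCn : C ≤ n) (h3c : 3 * c ≤ n - C)
    (hmc : 2 * m + c ≤ 3 * n - C * Nat.log 2 (n + 2)) (hCK : 2 * 2 ^ (3 * n) ≤ C * K) :
    2 * ((m + 1) * 2 ^ c * 2 ^ n * 2 ^ n) + (n + 1) * 2 ^ c * 2 ^ m * 2 ^ m + 2 ^ (3 * n)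
      + 3 * c * K < n * K := by
  have hlog := three_mul_log_add_le (hC.trans hCn)
  have hnL := Nat.lt_pow_succ_log_self one_lt_two (n + 2)
  have hL : 1 ≤ Nat.log 2 (n + 2) := Nat.le_log_of_pow_le one_lt_two (by omega)
  generalize Nat.log 2 (n + 2) = L at *
  replace hnL : n < 2 ^ (L + 1) := by omega
  have hCL : L + 3 ≤ C * L := by nlinarith
  have hA := eight_mul_le_two_pow (m := m) (c := c) hnL (by omega) (by omega)
  have hF := four_mul_le_two_pow (m := m) (c := c) hnL (by omega)
  have hcK : 3 * c * K + C * K ≤ n * K := by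
    rw [← add_mul]; exact Nat.mul_le_mul_right K (by omega)
  have := @Nat.one_le_two_pow (3 * n)
  omega

/-- For every `0 < δ < 1` there is a constant `C` such that for all `n ≥ C`, `m`, `c`
with `3c ≤ n - C` and `2m + c ≤ 3n - C·log₂(n+2)`, there is a function
`T : B^n × B^n × B^n → B^n` such that for all multi-valued `A, B, F` with values of
cardinality at most `2^c`, fewer than `δ·2^(3n)` triples `(x,y,z)` admit a
decomposition, i.e. have some `a ∈ A(x,y)`, `b ∈ B(y,z)` with `T(x,y,z) ∈ F(a,b)`. -/
theorem exists_function_mostly_uncovered (δ : ℝ) (hδ0 : 0 < δ) (hδ1 : δ < 1) :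
    ∃ C : ℕ, ∀ n m c : ℕ, C ≤ n → 3 * c ≤ n - C →
      2 * m + c ≤ 3 * n - C * Nat.log 2 (n + 2) →
      ∃ T : BS n → BS n → BS n → BS n,
        ∀ (A B : BS n → BS n → Finset (BS m)) (F : BS m → BS m → Finset (BS n)),
          (∀ x y, (A x y).card ≤ 2 ^ c) →
          (∀ y z, (B y z).card ≤ 2 ^ c) →
          (∀ a b, (F a b).card ≤ 2 ^ c) →
          ((Finset.univ.filter (fun w : BS n × BS n × BS n =>
              ∃ a ∈ A w.1 w.2.1, ∃ b ∈ B w.2.1 w.2.2,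
                T w.1 w.2.1 w.2.2 ∈ F a b)).card : ℝ) < δ * 2 ^ (3 * n) := by
  refine ⟨max 62 ⌈2 / δ⌉₊, fun n m c hCn h3c hmc => ?_⟩
  set C := max 62 ⌈2 / δ⌉₊
  set K := ⌈δ * 2 ^ (3 * n)⌉₊
  have hKN : K ≤ 2 ^ (3 * n) :=
    Nat.ceil_le.2 (by exact_mod_cast mul_le_of_le_one_left (by positivity) hδ1.le)
  have hCK : 2 * 2 ^ (3 * n) ≤ C * K := by
    have hC : 2 / δ ≤ C := (Nat.le_ceil _).trans (by exact_mod_cast le_max_right _ _)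
    have hK : δ * 2 ^ (3 * n) ≤ K := Nat.le_ceil _
    have : (2 : ℝ) * 2 ^ (3 * n) = 2 / δ * (δ * 2 ^ (3 * n)) := by field_simp
    exact_mod_cast this.trans_le (mul_le_mul hC hK (by positivity) (by positivity))
  obtain ⟨T, hT⟩ := exists_function_card_filter_decomp_lt hKN
    (count_exponent_lt (le_max_left _ _) hCn h3c hmc hCK)
  exact ⟨T, fun A B F hA hB hF => Nat.lt_ceil.1 (hT A B F hA hB hF)⟩
end

section
/- Let S be a finite nonempty set of states with a designated neutral state ν and an injection ι : Bool → S, let k be a natural number and f an even natural number, and set N = 2k + f. Suppose T : B^k × B^f × B^k → Bool is computed 'as soon as possible' by a non-uniform cellular automaton over S: there exist functions g : ℕ × ℤ × (S × S × S) → S and ρ : S → Bool such that, defining for each input (x,y,z) the states s(0,i) = ι(w_i) for 1 ≤ i ≤ N (where w = xyz is the concatenated input, w_i its i-th bit), s(0,i) = ν for i ∉ [1,N], and s(t+1,i) = g(t, i, (s(t,i−1), s(t,i), s(t,i+1))) for all t ≥ 0 and i ∈ ℤ, one has T(x,y,z) = ρ(s(k + f/2, k + f/2)) for all inputs. Then there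 exist functions a : B^k × B^f → S^(k+1), b : B^f × B^k → S^k, and t : S^(k+1) × S^k → Bool such that T(x,y,z) = t(a(x,y), b(y,z)) for all x, y, z. In particular, the decomposition complexity of T is at most (2k+1)·⌈log₂ |S|⌉. -/
/-- Run of a non-uniform cellular automaton: the state of cell `i` at time `t + 1`
is the vertex-dependent function `g` applied to the states of cells
`i - 1`, `i`, `i + 1` at time `t`. -/
def caRun {S : Type*} (g : ℕ × ℤ × (S × S × S) → S) (init : ℤ → S) : ℕ → ℤ → S
  | 0 => init
  | t + 1 => fun i =>
      g (t, i, (caRun g init t (i - 1), caRun g init t i, caRun g init t (i + 1)))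

/-- Initial configuration: the `N = k + f + k` bits of the concatenated input
`w = xyz` are placed in cells `1, …, N`; every other cell is in the neutral
state `ν`. -/
def caInit {S : Type*} (ν : S) (ι : Bool → S) {k f : ℕ}
    (x : BS k) (y : BS f) (z : BS k) : ℤ → S := fun i =>
  if h : 1 ≤ i ∧ i ≤ (k + f + k : ℕ) then
    ι (Fin.append (Fin.append x y) z ⟨(i - 1).toNat, by omega⟩)
  else ν

lemma caRun_split {S : Type*} (g : ℕ × ℤ × (S × S × S) → S) (init : ℤ → S)
    (t₀ : ℕ) : ∀ (s : ℕ) (i : ℤ),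
    caRun g init (t₀ + s) i
      = caRun (fun p => g (p.1 + t₀, p.2.1, p.2.2)) (caRun g init t₀) s i := by
  intro s
  induction s with
  | zero => intro i; rfl
  | succ s ih =>
    intro i
    have h : t₀ + (s + 1) = (t₀ + s) + 1 := rfl
    rw [h]
    simp only [caRun, ih]
    rw [Nat.add_comm s t₀]

lemma caRun_local {S : Type*} (g : ℕ × ℤ × (S × S × S) → S) (init₁ init₂ : ℤ → S) :
    ∀ (s : ℕ) (i : ℤ), (∀ j : ℤ, i - s ≤ j → j ≤ i + s → init₁ j = init₂ j) →
    caRun g init₁ s i = caRun g init₂ s i := by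
  intro s
  induction s with
  | zero => intro i h; exact h i (by simp) (by simp)
  | succ s ih =>
    intro i h
    simp only [caRun]
    rw [ih (i-1) (fun j h1 h2 => h j (by push_cast at *; omega) (by push_cast at *; omega)),
        ih i (fun j h1 h2 => h j (by push_cast at *; omega) (by push_cast at *; omega)),
        ih (i+1) (fun j h1 h2 => h j (by push_cast at *; omega) (by push_cast at *; omega))]

lemma append_left_agree {k f : ℕ} {α : Type*} (x : Fin k → α) (y : Fin f → α)
    (z z' : Fin k → α) (i : Fin (k + f + k)) (h : i.val < k + f) :
    Fin.append (Fin.append x y) z i = Fin.append (Fin.append x y) z' i := by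
  have hi : i = Fin.castAdd k ⟨i.val, h⟩ := Fin.ext rfl
  rw [hi, Fin.append_left, Fin.append_left]

lemma append_right_agree {k f : ℕ} {α : Type*} (x x' : Fin k → α) (y : Fin f → α)
    (z : Fin k → α) (i : Fin (k + f + k)) (h : k ≤ i.val) :
    Fin.append (Fin.append x y) z i = Fin.append (Fin.append x' y) z i := by
  rcases lt_or_ge i.val (k + f) with hlt | hge
  · have hi : i = Fin.castAdd k ⟨i.val, hlt⟩ := Fin.ext rfl
    rw [hi, Fin.append_left, Fin.append_left]
    have h2 : (⟨i.val, hlt⟩ : Fin (k + f)) = Fin.natAdd k ⟨i.val - k, by omega⟩ :=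
      Fin.ext (by simp; omega)
    rw [h2, Fin.append_right, Fin.append_right]
  · have hi : i = Fin.natAdd (k + f) ⟨i.val - (k + f), by omega⟩ := Fin.ext (by simp; omega)
    rw [hi, Fin.append_right, Fin.append_right]

/-- If a predicate `T : B^k × B^f × B^k → Bool` is computed "as soon as possible" by a
non-uniform cellular automaton over a finite state set `S` (output read off cell
`k + f/2` at time `k + f/2`), then `T(x,y,z) = t(a(x,y), b(y,z))` for some
`a` with values in `S^(k+1)` and `b` with values in `S^k`; in particular, the
decomposition complexity of `T` is at most `(2k+1)·⌈log₂ |S|⌉`. -/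
theorem ca_asap_decomposition {S : Type*} [Fintype S] [Nonempty S]
    (ν : S) (ι : Bool → S) (hι : Function.Injective ι)
    (k f : ℕ) (hf : Even f)
    (T : BS k → BS f → BS k → Bool)
    (g : ℕ × ℤ × (S × S × S) → S) (ρ : S → Bool)
    (hT : ∀ x y z, T x y z =
      ρ (caRun g (caInit ν ι x y z) (k + f / 2) ((k + f / 2 : ℕ) : ℤ))) :
    (∃ (a : BS k → BS f → (Fin (k + 1) → S)) (b : BS f → BS k → (Fin k → S))
        (t : (Fin (k + 1) → S) → (Fin k → S) → Bool),
        ∀ x y z, T x y z = t (a x y) (b y z)) ∧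
      DecompBound T ((2 * k + 1) * Nat.clog 2 (Fintype.card S)) := by
  obtain ⟨d, hd⟩ := hf
  have hff : f / 2 + f / 2 = f := by omega
  -- the middle column functions
  set xdef : BS k := fun _ => false with hxdef
  set zdef : BS k := fun _ => false with hzdef
  set g' : ℕ × ℤ × (S × S × S) → S := fun p => g (p.1 + f / 2, p.2.1, p.2.2) with hg'
  set a : BS k → BS f → Fin (k + 1) → S := fun x y j =>
    caRun g (caInit ν ι x y zdef) (f / 2) ((f / 2 + j.val : ℕ) : ℤ) with ha
  set b : BS f → BS k → Fin k → S := fun y z j =>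
    caRun g (caInit ν ι xdef y z) (f / 2) ((k + f / 2 + 1 + j.val : ℕ) : ℤ) with hb
  set w : (Fin (k + 1) → S) → (Fin k → S) → ℤ → S := fun A B i =>
    if h1 : ((f / 2 : ℕ) : ℤ) ≤ i ∧ i ≤ ((k + f / 2 : ℕ) : ℤ) then
      A ⟨(i - ((f / 2 : ℕ) : ℤ)).toNat, by omega⟩
    else if h2 : ((k + f / 2 + 1 : ℕ) : ℤ) ≤ i ∧ i ≤ ((2 * k + f / 2 : ℕ) : ℤ) then
      B ⟨(i - ((k + f / 2 + 1 : ℕ) : ℤ)).toNat, by omega⟩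
    else Classical.arbitrary S with hw
  set tf : (Fin (k + 1) → S) → (Fin k → S) → Bool := fun A B =>
    ρ (caRun g' (w A B) k ((k + f / 2 : ℕ) : ℤ)) with htf
  have key : ∀ x y z, T x y z = tf (a x y) (b y z) := by
    intro x y z
    rw [hT]
    simp only [htf]
    congr 1
    have hsplit : k + f / 2 = f / 2 + k := by omega
    rw [hsplit, caRun_split]
    apply caRun_local
    intro j hj1 hj2
    by_cases hL : ((f / 2 : ℕ) : ℤ) ≤ j ∧ j ≤ ((k + f / 2 : ℕ) : ℤ)
    · -- left light cone: depends only on x, y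
      simp only [hw]
      rw [dif_pos hL]
      simp only [ha]
      have hcell : ((f / 2 + (j - ((f / 2 : ℕ) : ℤ)).toNat : ℕ) : ℤ) = j := by
        push_cast; omega
      rw [hcell]
      apply caRun_local
      intro c hc1 hc2
      simp only [caInit]
      by_cases hcN : 1 ≤ c ∧ c ≤ ((k + f + k : ℕ) : ℤ)
      · rw [dif_pos hcN, dif_pos hcN]
        congr 1
        exact append_left_agree x y z zdef _ (by simp; omega)
      · rw [dif_neg hcN, dif_neg hcN]
    · -- right light cone: depends only on y, z
      have hR : ((k + f / 2 + 1 : ℕ) : ℤ) ≤ j ∧ j ≤ ((2 * k + f / 2 : ℕ) : ℤ) := by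
        push_cast at *; omega
      simp only [hw]
      rw [dif_neg hL, dif_pos hR]
      simp only [hb]
      have hcell : ((k + f / 2 + 1 + (j - ((k + f / 2 + 1 : ℕ) : ℤ)).toNat : ℕ) : ℤ) = j := by
        push_cast; omega
      rw [hcell]
      apply caRun_local
      intro c hc1 hc2
      simp only [caInit]
      by_cases hcN : 1 ≤ c ∧ c ≤ ((k + f + k : ℕ) : ℤ)
      · rw [dif_pos hcN, dif_pos hcN]
        congr 1
        exact append_right_agree x xdef y z _ (by simp; push_cast at *; omega)
      · rw [dif_neg hcN, dif_neg hcN]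
  refine ⟨⟨a, b, tf, key⟩, ?_⟩
  -- decomposition complexity bound
  set L := Nat.clog 2 (Fintype.card S) with hL
  have hcard : Fintype.card S ≤ 2 ^ L := Nat.le_pow_clog (by norm_num) _
  obtain ⟨e⟩ : Nonempty (S ↪ (Fin L → Bool)) := by
    apply Function.Embedding.nonempty_of_card_le
    simpa [Fintype.card_fun] using hcard
  set enc : ∀ n : ℕ, (Fin n → S) → BS (n * L) := fun n v j =>
    e (v (finProdFinEquiv.symm j).1) (finProdFinEquiv.symm j).2 with henc
  have hinj : ∀ n, Function.Injective (enc n) := by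
    intro n v v' hvv
    funext i
    apply e.injective
    funext p
    have := congrFun hvv (finProdFinEquiv (i, p))
    simp only [henc, Equiv.symm_apply_apply] at this
    exact this
  refine ⟨(k + 1) * L, k * L, le_of_eq (by ring),
    fun x y => enc (k + 1) (a x y), fun y z => enc k (b y z),
    fun A B => tf (Function.invFun (enc (k + 1)) A) (Function.invFun (enc k) B), ?_⟩
  intro x y z
  rw [key]
  show tf (a x y) (b y z)
      = tf (Function.invFun (enc (k + 1)) (enc (k + 1) (a x y)))
          (Function.invFun (enc k) (enc k (b y z)))
  rw [Function.leftInverse_invFun (hinj (k + 1)) (a x y),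
    Function.leftInverse_invFun (hinj k) (b y z)]
end

section
/- Let S be a finite nonempty set of states with a designated neutral state ν and an injection ι : Bool → S. Then for all sufficiently large k (namely whenever (2k+1)·⌈log₂ |S|⌉ < 2^k) there is no non-uniform cellular automaton over S that computes the indexing predicate T_k : B^k × B^(2^(2k)) × B^k → Bool, T_k(x,y,z) = y(x,z), as soon as possible: there are no functions g : ℕ × ℤ × (S × S × S) → S and ρ : S → Bool such that, defining s(0,i) = ι(w_i) for 1 ≤ i ≤ N = 2k + 2^(2k) (w = xyz the concatenated input), s(0,i) = ν otherwise, and s(t+1,i) = g(t, i, (s(t,i−1), s(t,i), s(t,i+1))), one has T_k(x,y,z) = ρ(s(k + 2^(2k−1), k + 2^(2k−1))) for all inputs. -/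
/-!
Let `F = 2^(2k-1)`, so that the middle cell `k + F` is read at time `F + k`. Its state depends
only on the window of cells `F, …, 2k + F` at time `F`. By the speed-of-light bound, the cells
`F, …, k + F` of that window have not yet seen `z`, and the cells `k + F + 1, …, 2k + F` have not
yet seen `x`. Hence the table `y` is determined by the left windows for all `x` together with
the right windows for all `z`, i.e. by `(2k + 1)·2^k` states, which carry at most
`(2k + 1)·⌈log₂ |S|⌉·2^k < 2^(2k)` bits.
-/

open Set Function

theorem Fin.append_mk_of_lt {α : Sort*} {m n : ℕ} (u : Fin m → α) (v : Fin n → α) {i : ℕ}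
    (hi : i < m + n) (h : i < m) : Fin.append u v ⟨i, hi⟩ = u ⟨i, h⟩ :=
  Fin.append_left u v ⟨i, h⟩

theorem Fin.append_mk_of_le {α : Sort*} {m n : ℕ} (u : Fin m → α) (v : Fin n → α) {i : ℕ}
    (hi : i < m + n) (h : m ≤ i) : Fin.append u v ⟨i, hi⟩ = v ⟨i - m, by omega⟩ := by
  rw [← Fin.append_right u v ⟨i - m, by omega⟩]
  congr 1
  ext
  simp only [Fin.natAdd_mk]
  omega

/-- The one-way communication bound: a party holding `x, y` and a party holding `y, z` send
`L x y` and `R y z`, from which `out x y z` can be recovered. -/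
theorem injective_pair_of_determines {X Y Z A B C : Type*} {out : X → Y → Z → C}
    (hout : Injective fun y x z => out x y z) (L : X → Y → A) (R : Y → Z → B)
    (h : ∀ x z y y', L x y = L x y' → R y z = R y' z → out x y z = out x y' z) :
    Injective fun y => (fun x => L x y, fun z => R y z) := by
  intro y y' hyy'
  simp only [Prod.mk.injEq] at hyy'
  exact hout (funext₂ fun x z => h x z y y' (congrFun hyy'.1 x) (congrFun hyy'.2 z))

theorem pow_lt_two_pow_of_mul_clog_lt {s n m r : ℕ} (h : n * Nat.clog 2 s < m) (hr : 0 < r) :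
    s ^ (n * r) < 2 ^ (m * r) :=
  calc s ^ (n * r) ≤ (2 ^ Nat.clog 2 s) ^ (n * r) := by
        gcongr
        exact Nat.le_pow_clog one_lt_two s
    _ = 2 ^ (n * Nat.clog 2 s * r) := by rw [← pow_mul]; ring_nf
    _ < 2 ^ (m * r) := Nat.pow_lt_pow_right one_lt_two (Nat.mul_lt_mul_of_pos_right h hr)

section LightCone

variable {S : Type*} (g : ℕ × ℤ × (S × S × S) → S) {init₁ init₂ : ℤ → S}

theorem caRun_add_eq_of_eqOn {t : ℕ} (d : ℕ) {i : ℤ}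
    (h : EqOn (caRun g init₁ t) (caRun g init₂ t) (Icc (i - d) (i + d))) :
    caRun g init₁ (t + d) i = caRun g init₂ (t + d) i := by
  induction d generalizing t with
  | zero => exact h ⟨by simp, by simp⟩
  | succ d ih =>
    rw [← add_assoc, add_right_comm]
    refine ih fun j ⟨hj₁, hj₂⟩ => ?_
    push_cast at hj₁ hj₂ h
    simp only [caRun]
    rw [h ⟨by omega, by omega⟩, h ⟨by omega, by omega⟩, h ⟨by omega, by omega⟩]

theorem caRun_eq_of_eqOn (d : ℕ) {i : ℤ} (h : EqOn init₁ init₂ (Icc (i - d) (i + d))) :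
    caRun g init₁ d i = caRun g init₂ d i := by
  simpa using caRun_add_eq_of_eqOn g (t := 0) d h

end LightCone

section Init

variable {S : Type*} (ν : S) (ι : Bool → S) {k f : ℕ}

theorem caInit_eqOn_Iic (x : BS k) (y : BS f) (z z' : BS k) :
    EqOn (caInit ν ι x y z) (caInit ν ι x y z') (Iic (k + f : ℕ)) := by
  intro j (hj : j ≤ _)
  unfold caInit
  split_ifs with h
  · rw [Fin.append_mk_of_lt (Fin.append x y) z _ (by omega),
      Fin.append_mk_of_lt (Fin.append x y) z' _ (by omega)]
  · rfl

theorem caInit_eqOn_Ici (x x' : BS k) (y : BS f) (z : BS k) :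
    EqOn (caInit ν ι x y z) (caInit ν ι x' y z) (Ici (k + 1 : ℕ)) := by
  intro j (hj : _ ≤ j)
  unfold caInit
  split_ifs with h
  · by_cases hy : (j - 1).toNat < k + f
    · rw [Fin.append_mk_of_lt (Fin.append x y) z _ hy,
        Fin.append_mk_of_lt (Fin.append x' y) z _ hy, Fin.append_mk_of_le x y _ (by omega), Fin.append_mk_of_le x' y _ (by omega)]
    · rw [Fin.append_mk_of_le (Fin.append x y) z _ (by omega),
        Fin.append_mk_of_le (Fin.append x' y) z _ (by omega)]
  · rfl

theorem caRun_eq_of_eqOn_windows {F : ℕ} (hF : 2 * F ≤ f) (g : ℕ × ℤ × (S × S × S) → S)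
    {x x₀ : BS k} {y y' : BS f} {z z₀ : BS k}
    (hL : EqOn (caRun g (caInit ν ι x y z₀) F) (caRun g (caInit ν ι x y' z₀) F)
      (Icc (F : ℤ) (k + F)))
    (hR : EqOn (caRun g (caInit ν ι x₀ y z) F) (caRun g (caInit ν ι x₀ y' z) F)
      (Icc ((k + F + 1 : ℕ) : ℤ) (2 * k + F))) :
    caRun g (caInit ν ι x y z) (k + F) ((k + F : ℕ) : ℤ) =
      caRun g (caInit ν ι x y' z) (k + F) ((k + F : ℕ) : ℤ) := by
  have hz (y : BS f) (z z' : BS k) {c : ℤ} (hc : c ≤ k + F) :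
      caRun g (caInit ν ι x y z) F c = caRun g (caInit ν ι x y z') F c :=
    caRun_eq_of_eqOn g F fun j hj => caInit_eqOn_Iic ν ι x y z z' (by
      simp only [mem_Icc, mem_Iic] at hj ⊢; push_cast; omega)
  have hx (y : BS f) (x x' : BS k) {c : ℤ} (hc : k + F + 1 ≤ c) :
      caRun g (caInit ν ι x y z) F c = caRun g (caInit ν ι x' y z) F c :=
    caRun_eq_of_eqOn g F fun j hj => caInit_eqOn_Ici ν ι x x' y z (by
      simp only [mem_Icc, mem_Ici] at hj ⊢; push_cast; omega)
  rw [add_comm k F]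
  refine caRun_add_eq_of_eqOn g k fun j ⟨hj₁, hj₂⟩ => ?_
  push_cast at hj₁ hj₂ hR
  rcases le_or_gt j (k + F) with hj | hj
  · calc caRun g (caInit ν ι x y z) F j = caRun g (caInit ν ι x y z₀) F j := hz y z z₀ hj
      _ = caRun g (caInit ν ι x y' z₀) F j := hL ⟨by omega, hj⟩
      _ = caRun g (caInit ν ι x y' z) F j := hz y' z₀ z hj
  · calc caRun g (caInit ν ι x y z) F j = caRun g (caInit ν ι x₀ y z) F j := hx y x x₀ hj
      _ = caRun g (caInit ν ι x₀ y' z) F j := hR ⟨hj, by omega⟩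
      _ = caRun g (caInit ν ι x y' z) F j := hx y' x₀ x hj

end Init

theorem ca_asap_indexing_impossible_general {S : Type*} [Fintype S]
    (ν : S) (ι : Bool → S) (hι : Function.Injective ι)
    (k : ℕ) (hk : (2 * k + 1) * Nat.clog 2 (Fintype.card S) < 2 ^ k)
    (e : (BS k × BS k) ≃ Fin (2 ^ (2 * k))) :
    ¬ ∃ (g : ℕ × ℤ × (S × S × S) → S) (ρ : S → Bool),
        ∀ (x : BS k) (y : BS (2 ^ (2 * k))) (z : BS k),
          y (e (x, z)) =
            ρ (caRun g (caInit ν ι x y z)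
                (k + 2 ^ (2 * k - 1)) ((k + 2 ^ (2 * k - 1) : ℕ) : ℤ)) := by
  rintro ⟨g, ρ, hcomp⟩
  -- needed for `hF`: at `k = 0` the truncated exponent `2 * k - 1` gives `F = 1`
  have hk₀ : 0 < k := by
    have hS : 2 ≤ Fintype.card S := by simpa using Fintype.card_le_of_injective ι hι
    have := Nat.clog_pos one_lt_two hS
    by_contra! h
    simp [Nat.le_zero.1 h] at hk
    omega
  set F := 2 ^ (2 * k - 1)
  have hF : 2 ^ (2 * k) = 2 * F := by rw [← pow_succ']; congr 1; omega
  let L (x : BS k) (y : BS (2 ^ (2 * k))) : Icc (F : ℤ) (k + F) → S :=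
    (Icc _ _).domRestrict (caRun g (caInit ν ι x y default) F)
  let R (y : BS (2 ^ (2 * k))) (z : BS k) : Icc ((k + F + 1 : ℕ) : ℤ) (2 * k + F) → S :=
    (Icc _ _).domRestrict (caRun g (caInit ν ι default y z) F)
  have hindex : Injective fun (y : BS (2 ^ (2 * k))) (x z : BS k) => y (e (x, z)) :=
    fun y y' h => e.surjective.injective_comp_right (funext fun (x, z) => congrFun₂ h x z)
  have hwindows := injective_pair_of_determines hindex L R fun x z y y' hL hR => by
    rw [hcomp x y z, hcomp x y' z]
    exact congrArg ρ <| caRun_eq_of_eqOn_windows ν ι hF.ge g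
      (domRestrict_eq_domRestrict_iff.1 hL) (domRestrict_eq_domRestrict_iff.1 hR)
  have hcard := Fintype.card_le_of_injective _ hwindows
  simp only [Fintype.card_fun, Fintype.card_prod, Fintype.card_bool, Fintype.card_fin,
    Fintype.card_Icc, Int.card_Icc] at hcard
  have hlenL : ((k : ℤ) + F + 1 - F).toNat = k + 1 := by omega
  have hlenR : (2 * (k : ℤ) + F + 1 - ((k + F + 1 : ℕ) : ℤ)).toNat = k := by omega
  rw [hlenL, hlenR] at hcard
  refine (pow_lt_two_pow_of_mul_clog_lt hk (Nat.two_pow_pos k)).not_ge ?_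
  calc 2 ^ (2 ^ k * 2 ^ k) = 2 ^ 2 ^ (2 * k) := by ring
    _ ≤ _ := hcard
    _ = Fintype.card S ^ ((2 * k + 1) * 2 ^ k) := by ring

/-- Whenever `(2k+1)·⌈log₂ |S|⌉ < 2^k`, no non-uniform cellular automaton over `S`
computes the indexing predicate `T_k(x,y,z) = y(x,z)` "as soon as possible", i.e.
with the output read off the middle cell `k + 2^(2k-1)` at time `k + 2^(2k-1)`. -/
theorem ca_asap_indexing_impossible {S : Type*} [Fintype S] [Nonempty S]
    (ν : S) (ι : Bool → S) (hι : Function.Injective ι)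
    (k : ℕ) (hk : (2 * k + 1) * Nat.clog 2 (Fintype.card S) < 2 ^ k)
    (e : (BS k × BS k) ≃ Fin (2 ^ (2 * k))) :
    ¬ ∃ (g : ℕ × ℤ × (S × S × S) → S) (ρ : S → Bool),
        ∀ (x : BS k) (y : BS (2 ^ (2 * k))) (z : BS k),
          y (e (x, z)) =
            ρ (caRun g (caInit ν ι x y z)
                (k + 2 ^ (2 * k - 1)) ((k + 2 ^ (2 * k - 1) : ℕ) : ℤ)) :=
  ca_asap_indexing_impossible_general ν ι hι k hk e
end

section
/- Let p, q, r, m be natural numbers with m ≥ 1, let n = p + q + r, and let ε be a real number with 0 < ε < 1/2. The number of predicates T : B^p × B^q × B^r → Bool for which there exists a predicate T' of decomposition complexity at most m agreeing with T on at least (1−ε)·2^n input triples is at most m · 2^(m·2^(p+q) + m·2^(q+r) + 2^m) · (∑_{i=0}^{⌊ε·2^n⌋} C(2^n, i)), where C(N,i) denotes the binomial coefficient. -/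
/-! A predicate that agrees with `T'` on all but `K` input triples is `T'` with its values flipped
on a set of at most `K` triples, so there are at most `∑_{i ≤ K} C(2^n, i)` such predicates per
`T'`. A decomposition with `u + v ≤ m` can be padded to one with `v = m - u` exactly, so the
predicates of decomposition complexity at most `m` are counted by the data `(a, b, t)` for the
`m + 1` values of `u`. -/

open Function Set

section Hamming

variable {ι : Type*} [Fintype ι]

def hammingNbhd {β : ι → Type*} [∀ i, DecidableEq (β i)] (D : Set (∀ i, β i)) (K : ℕ) :
    Set (∀ i, β i) :=
  {g | ∃ f ∈ D, hammingDist g f ≤ K}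

lemma hammingDist_le_floor_of_agree {β : Type*} [DecidableEq β] {x y : ι → β} {δ : ℝ}
    (h : (1 - δ) * Fintype.card ι ≤ (Finset.univ.filter fun i => x i = y i).card) :
    hammingDist x y ≤ ⌊δ * Fintype.card ι⌋₊ := by
  apply Nat.le_floor
  have hsplit := Finset.card_filter_add_card_filter_not (s := Finset.univ) fun i => x i = y i
  rw [Finset.card_univ] at hsplit
  have hsplit' : ((Finset.univ.filter fun i => x i = y i).card : ℝ) + hammingDist x y =
      Fintype.card ι := by exact_mod_cast hsplit
  linarith

lemma ncard_setOf_finset_card_le (K : ℕ) :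
    {S : Finset ι | S.card ≤ K}.ncard ≤
      ∑ i ∈ Finset.range (K + 1), (Fintype.card ι).choose i := by
  classical
  let layer : ℕ → Set (Finset ι) := fun i => ↑((Finset.univ : Finset ι).powersetCard i)
  have hsub : {S : Finset ι | S.card ≤ K} ⊆ ⋃ i ∈ Finset.range (K + 1), layer i := by
    intro S hS
    simp only [layer, mem_iUnion, Finset.mem_coe, Finset.mem_powersetCard_univ, Finset.mem_range]
    exact ⟨S.card, Nat.lt_succ_of_le hS, rfl⟩
  calc {S : Finset ι | S.card ≤ K}.ncard
      ≤ (⋃ i ∈ Finset.range (K + 1), layer i).ncard := ncard_le_ncard hsub (toFinite _)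
    _ ≤ ∑ i ∈ Finset.range (K + 1), (layer i).ncard := Finset.set_ncard_biUnion_le _ _
    _ = ∑ i ∈ Finset.range (K + 1), (Fintype.card ι).choose i := by
        simp only [layer, ncard_coe_finset, Finset.card_powersetCard, Finset.card_univ]

lemma ncard_hammingNbhd_le [DecidableEq ι] (D : Set (ι → Bool)) (K : ℕ) :
    (hammingNbhd D K).ncard ≤
      D.ncard * ∑ i ∈ Finset.range (K + 1), (Fintype.card ι).choose i := by
  let flipOn : (ι → Bool) × Finset ι → ι → Bool :=
    fun fS i => xor (fS.1 i) (decide (i ∈ fS.2))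
  let small : Set (Finset ι) := {S | S.card ≤ K}
  have hsub : hammingNbhd D K ⊆ flipOn '' (D ×ˢ small) := by
    rintro g ⟨f, hf, hgf⟩
    refine ⟨(f, Finset.univ.filter fun i => f i ≠ g i), ⟨hf, ?_⟩, funext fun i => ?_⟩
    · rwa [hammingDist_comm] at hgf
    · simp only [flipOn, Finset.mem_filter, Finset.mem_univ, true_and]
      cases f i <;> cases g i <;> rfl
  calc (hammingNbhd D K).ncard
      ≤ (flipOn '' (D ×ˢ small)).ncard := ncard_le_ncard hsub (toFinite _)
    _ ≤ (D ×ˢ small).ncard := ncard_image_le (toFinite _)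
    _ = D.ncard * small.ncard := ncard_prod
    _ ≤ _ := Nat.mul_le_mul_left _ (ncard_setOf_finset_card_le K)

end Hamming

section Decomposition

variable {p q r : ℕ} {M : Type*}

lemma nonempty_embedding_bs {u u' : ℕ} (h : u ≤ u') : Nonempty (BS u ↪ BS u') :=
  Function.Embedding.nonempty_of_card_le (by simpa using Nat.pow_le_pow_right two_pos h)

lemma exists_decomp_of_le {u v u' v' : ℕ} (hu : u ≤ u') (hv : v ≤ v')
    (a : BS p → BS q → BS u) (b : BS q → BS r → BS v) (t : BS u → BS v → M) :
    ∃ (a' : BS p → BS q → BS u') (b' : BS q → BS r → BS v') (t' : BS u' → BS v' → M),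
      ∀ x y z, t (a x y) (b y z) = t' (a' x y) (b' y z) := by
  obtain ⟨e⟩ := nonempty_embedding_bs hu
  obtain ⟨f⟩ := nonempty_embedding_bs hv
  refine ⟨fun x y => e (a x y), fun y z => f (b y z),
    fun w₁ w₂ => t (invFun e w₁) (invFun f w₂), fun x y z => ?_⟩
  simp only [leftInverse_invFun e.injective _, leftInverse_invFun f.injective _]

abbrev DecompData (p q r u v : ℕ) (M : Type*) : Type _ :=
  (BS p → BS q → BS u) × (BS q → BS r → BS v) × (BS u → BS v → M)

def DecompData.eval {u v : ℕ} (d : DecompData p q r u v M) : BS p → BS q → BS r → M :=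
  fun x y z => d.2.2 (d.1 x y) (d.2.1 y z)

lemma DecompBound.exists_eval {T : BS p → BS q → BS r → M} {m : ℕ} (h : DecompBound T m) :
    ∃ u ≤ m, ∃ d : DecompData p q r u (m - u) M, d.eval = T := by
  obtain ⟨u, v, huv, a, b, t, hT⟩ := h
  obtain ⟨a', b', t', h'⟩ :=
    exists_decomp_of_le (u' := m - v) (v' := m - (m - v)) (by omega) (by omega) a b t
  refine ⟨m - v, by omega, (a', b', t'), funext₃ fun x y z => ?_⟩
  exact ((hT x y z).trans (h' x y z)).symm

lemma card_decompData (u v : ℕ) :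
    Nat.card (DecompData p q r u v Bool) =
      2 ^ (u * 2 ^ (p + q) + v * 2 ^ (q + r) + 2 ^ (u + v)) := by
  simp only [Nat.card_eq_fintype_card, Fintype.card_prod, Fintype.card_fun, Fintype.card_bool,
    Fintype.card_fin, ← pow_mul, ← pow_add]
  ring_nf

lemma sum_range_two_pow_le {m A B c : ℕ} (hm : 1 ≤ m) (hA : 1 ≤ A) (hB : 1 ≤ B) :
    ∑ u ∈ Finset.range (m + 1), 2 ^ (u * A + (m - u) * B + c) ≤
      m * 2 ^ (m * A + m * B + c) := by
  -- `(m - u) * A + u * B ≥ m` leaves a factor `2 ^ m` to absorb the `m + 1` terms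
  have hterm : ∀ u ∈ Finset.range (m + 1),
      2 ^ m * 2 ^ (u * A + (m - u) * B + c) ≤ 2 ^ (m * A + m * B + c) := by
    intro u hu
    obtain ⟨w, rfl⟩ := Nat.exists_eq_add_of_le (Finset.mem_range_succ_iff.mp hu)
    rw [← pow_add, Nat.add_sub_cancel_left]
    exact Nat.pow_le_pow_right two_pos (by nlinarith)
  have hm2 : m + 1 ≤ 2 ^ m * m := by
    have : 2 ≤ 2 ^ m := by simpa using Nat.pow_le_pow_right two_pos hm
    nlinarith
  refine Nat.le_of_mul_le_mul_left ?_ (pow_pos two_pos m)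
  calc 2 ^ m * ∑ u ∈ Finset.range (m + 1), 2 ^ (u * A + (m - u) * B + c)
      = ∑ u ∈ Finset.range (m + 1), 2 ^ m * 2 ^ (u * A + (m - u) * B + c) :=
        Finset.mul_sum _ _ _
    _ ≤ ∑ _u ∈ Finset.range (m + 1), 2 ^ (m * A + m * B + c) := Finset.sum_le_sum hterm
    _ = (m + 1) * 2 ^ (m * A + m * B + c) := by simp
    _ ≤ 2 ^ m * (m * 2 ^ (m * A + m * B + c)) := by
        rw [← mul_assoc]; exact Nat.mul_le_mul_right _ hm2

lemma ncard_setOf_decompBound_le {m : ℕ} (hm : 1 ≤ m) :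
    {T : BS p → BS q → BS r → Bool | DecompBound T m}.ncard ≤
      m * 2 ^ (m * 2 ^ (p + q) + m * 2 ^ (q + r) + 2 ^ m) := by
  let E : ℕ → Set (BS p → BS q → BS r → Bool) := fun u =>
    range (@DecompData.eval p q r Bool u (m - u))
  have hsub : {T : BS p → BS q → BS r → Bool | DecompBound T m} ⊆
      ⋃ u ∈ Finset.range (m + 1), E u := by
    intro T hT
    obtain ⟨u, hu, d, rfl⟩ := DecompBound.exists_eval hT
    exact mem_biUnion (Finset.mem_coe.mpr (Finset.mem_range_succ_iff.mpr hu)) (mem_range_self d)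
  calc {T : BS p → BS q → BS r → Bool | DecompBound T m}.ncard
      ≤ (⋃ u ∈ Finset.range (m + 1), E u).ncard := ncard_le_ncard hsub (toFinite _)
    _ ≤ ∑ u ∈ Finset.range (m + 1), (E u).ncard := Finset.set_ncard_biUnion_le _ _
    _ ≤ ∑ u ∈ Finset.range (m + 1),
          2 ^ (u * 2 ^ (p + q) + (m - u) * 2 ^ (q + r) + 2 ^ m) := by
        refine Finset.sum_le_sum fun u hu => (Finite.card_range_le _).trans_eq ?_
        rw [card_decompData, Nat.add_sub_cancel' (Finset.mem_range_succ_iff.mp hu)]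
    _ ≤ _ := sum_range_two_pow_le hm Nat.one_le_two_pow Nat.one_le_two_pow

end Decomposition

theorem count_approximable_predicates_general (p q r m : ℕ) (hm : 1 ≤ m)
    (ε : ℝ) :
    Nat.card {T : BS p → BS q → BS r → Bool //
        ∃ T' : BS p → BS q → BS r → Bool, DecompBound T' m ∧
          (1 - ε) * 2 ^ (p + q + r) ≤
            ((Finset.univ.filter (fun w : BS p × BS q × BS r =>
                T w.1 w.2.1 w.2.2 = T' w.1 w.2.1 w.2.2)).card : ℝ)} ≤
      m * 2 ^ (m * 2 ^ (p + q) + m * 2 ^ (q + r) + 2 ^ m) *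
        ∑ i ∈ Finset.range (⌊ε * 2 ^ (p + q + r)⌋₊ + 1), Nat.choose (2 ^ (p + q + r)) i := by
  classical
  have hcard : Fintype.card (BS p × BS q × BS r) = 2 ^ (p + q + r) := by
    simp only [Fintype.card_prod, Fintype.card_fun, Fintype.card_bool, Fintype.card_fin, pow_add,
      mul_assoc]
  let φ : (BS p → BS q → BS r → Bool) → BS p × BS q × BS r → Bool :=
    fun T w => T w.1 w.2.1 w.2.2
  have hφ : Injective φ := fun T₁ T₂ h => funext₃ fun x y z => congrFun h (x, y, z)
  have hdist : ∀ T T' : BS p → BS q → BS r → Bool,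
      (1 - ε) * 2 ^ (p + q + r) ≤ ((Finset.univ.filter fun w => φ T w = φ T' w).card : ℝ) →
        hammingDist (φ T) (φ T') ≤ ⌊ε * 2 ^ (p + q + r)⌋₊ := by
    intro T T' hagree
    have h := hammingDist_le_floor_of_agree (x := φ T) (y := φ T') (δ := ε)
    rw [hcard] at h
    push_cast at h
    exact h hagree
  calc _ ≤ (hammingNbhd (φ '' {T' | DecompBound T' m}) ⌊ε * 2 ^ (p + q + r)⌋₊).ncard := by
        refine ncard_le_ncard_of_injOn φ ?_ hφ.injOn (toFinite _)
        rintro T ⟨T', hT', hagree⟩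
        exact ⟨φ T', mem_image_of_mem φ hT', hdist T T' hagree⟩
    _ ≤ (φ '' {T' | DecompBound T' m}).ncard *
          ∑ i ∈ Finset.range (⌊ε * 2 ^ (p + q + r)⌋₊ + 1), (2 ^ (p + q + r)).choose i := by
        rw [← hcard]
        exact ncard_hammingNbhd_le _ _
    _ ≤ _ := by
        gcongr
        exact (ncard_image_le (toFinite _)).trans (ncard_setOf_decompBound_le hm)

/-- The number of predicates `T : B^p × B^q × B^r → Bool` that are ε-approximated by
some predicate of decomposition complexity at most `m` (i.e. agree with it on at
least `(1-ε)·2^n` of the `2^n` input triples, `n = p + q + r`) is at most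
`m · 2^(m·2^(p+q) + m·2^(q+r) + 2^m) · ∑_{i=0}^{⌊ε·2^n⌋} C(2^n, i)`. -/
theorem count_approximable_predicates (p q r m : ℕ) (hm : 1 ≤ m)
    (ε : ℝ) (hε0 : 0 < ε) (hε : ε < 1 / 2) :
    Nat.card {T : BS p → BS q → BS r → Bool //
        ∃ T' : BS p → BS q → BS r → Bool, DecompBound T' m ∧
          (1 - ε) * 2 ^ (p + q + r) ≤
            ((Finset.univ.filter (fun w : BS p × BS q × BS r =>
                T w.1 w.2.1 w.2.2 = T' w.1 w.2.1 w.2.2)).card : ℝ)} ≤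
      m * 2 ^ (m * 2 ^ (p + q) + m * 2 ^ (q + r) + 2 ^ m) *
        ∑ i ∈ Finset.range (⌊ε * 2 ^ (p + q + r)⌋₊ + 1), Nat.choose (2 ^ (p + q + r)) i :=
  count_approximable_predicates_general p q r m hm ε
end
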